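/- arXiv:2206.01073 — 9 statements merged into one kernel-verified Lean document; each statement's English description precedes it below -/
import Mathlib

section
/- Let N be a positive integer, a ∈ (0,1/2) be such that m := aN/4 is a positive integer, and let P > 0 satisfy P ≤ N and aP > 256. Consider a random graph on a vertex set 𝒮 of size m in which each unordered pair of distinct vertices is an edge independently with probability P/N. For A ⊆ 𝒮 write ρ_A = |A|/m and L_A for the number of edges with one endpoint in A and the other in 𝒮∖A. Then there exists a constant ρ₀ ∈ (1/4,1/2), independent of N, a and P, such that the probability that there exists A ⊆ 𝒮 with ρ_A ∈ [ρ₀, 1−ρ₀] and L_A < ρ_A(1−ρ_A)·a²·P·N/32 is at most N·exp(−ρ₀·a·N/4). -/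
/-!
Every cross pair is an independent Bernoulli(p) edge with p = P/N, and the threshold in the
statement is exactly half the expected number p·|A|(m-|A|) of cross edges of A. The Chernoff
bound at t = -1 bounds each such lower tail by exp(-(1/2 - 1/e)·p|A|(m-|A|)). For
ρ_A ∈ [3/10, 7/10] there are at least (21/100)m² cross pairs, and mp = aP/4 > 64, so even after
a union bound over the 2^m subsets the probability is at most exp(-3m/10) ≤ N exp(-ρ₀aN/4)
with ρ₀ = 3/10.
-/

open MeasureTheory ProbabilityTheory Finset

/-- The number of edges between `A ⊆ 𝒮` and its complement, in the configuration `ω`: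
the number of unordered pairs `{i,j}` with `i ∈ A`, `j ∉ A` whose edge is present. -/
noncomputable def crossEdges {m : ℕ} {Ω : Type*} (X : Sym2 (Fin m) → Ω → Bool)
    (A : Finset (Fin m)) (ω : Ω) : ℕ :=
  Set.ncard {e : Sym2 (Fin m) | (∃ i ∈ A, ∃ j ∉ A, e = s(i, j)) ∧ X e ω = true}

section Bernoulli

variable {Ω : Type*} [MeasurableSpace Ω] {μ : Measure Ω} [IsProbabilityMeasure μ]

lemma mgf_ite_bool {B : Ω → Bool} (hB : Measurable B) {p : ℝ} (hp : 0 ≤ p)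
    (hμB : μ {ω | B ω = true} = ENNReal.ofReal p) (t : ℝ) :
    mgf (fun ω => if B ω then (1 : ℝ) else 0) μ t = 1 + p * (Real.exp t - 1) := by
  have hs : MeasurableSet {ω | B ω = true} := hB (measurableSet_singleton true)
  have hexp : (fun ω => Real.exp (t * if B ω then (1 : ℝ) else 0))
      = fun ω => 1 + (Real.exp t - 1) * {ω | B ω = true}.indicator 1 ω := by
    funext ω
    by_cases h : B ω <;> simp [h]
  rw [mgf, hexp,
    integral_add (integrable_const 1) (((integrable_const 1).indicator hs).const_mul _),
    integral_const_mul, integral_indicator_one hs, measureReal_def, hμB, ENNReal.toReal_ofReal hp]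
  simp [mul_comm]

-- Chernoff at `t = -1`, bounding each factor `1 + p (e⁻¹ - 1)` of the mgf by its exponential.
theorem measure_sum_ite_le_half_mean_le {ι : Type*} {X : ι → Ω → Bool}
    (hX : ∀ i, Measurable (X i)) (hind : iIndepFun X μ) (s : Finset ι) {p : ℝ} (hp : 0 ≤ p)
    (hμX : ∀ i ∈ s, μ {ω | X i ω = true} = ENNReal.ofReal p) :
    μ {ω | ∑ i ∈ s, (if X i ω then (1 : ℝ) else 0) ≤ #s * p / 2}
      ≤ ENNReal.ofReal (Real.exp (-((1 / 2 - Real.exp (-1)) * (#s * p)))) := by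
  set Z : ι → Ω → ℝ := fun i ω => if X i ω then 1 else 0
  have hZ : ∀ i, Measurable (Z i) := fun i =>
    (Measurable.of_discrete (f := fun b : Bool => if b then (1 : ℝ) else 0)).comp (hX i)
  have hZind : iIndepFun Z μ :=
    hind.comp (fun _ b => if b then (1 : ℝ) else 0) fun _ => Measurable.of_discrete
  have hint : Integrable (fun ω => Real.exp (-1 * (∑ i ∈ s, Z i) ω)) μ :=
    hZind.integrable_exp_mul_sum hZ fun i _ =>
      integrable_exp_mul_of_mem_Icc (a := 0) (b := 1) (hZ i).aemeasurable
        (ae_of_all _ fun ω => by by_cases h : X i ω <;> simp [Z, h])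
  have hmgf : mgf (∑ i ∈ s, Z i) μ (-1) ≤ Real.exp (p * (Real.exp (-1) - 1)) ^ #s := by
    rw [hZind.mgf_sum hZ, ← prod_const]
    refine prod_le_prod (fun i _ => mgf_nonneg) fun i hi => ?_
    rw [mgf_ite_bool (hX i) hp (hμX i hi)]
    linarith [Real.add_one_le_exp (p * (Real.exp (-1) - 1))]
  rw [← ofReal_measureReal]
  refine ENNReal.ofReal_le_ofReal ?_
  calc μ.real {ω | ∑ i ∈ s, Z i ω ≤ #s * p / 2}
      = μ.real {ω | (∑ i ∈ s, Z i) ω ≤ #s * p / 2} := by simp only [Finset.sum_apply]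
    _ ≤ Real.exp (-(-1) * (#s * p / 2)) * mgf (∑ i ∈ s, Z i) μ (-1) :=
        measure_le_le_exp_mul_mgf _ (by norm_num) hint
    _ ≤ Real.exp (-(-1) * (#s * p / 2)) * Real.exp (p * (Real.exp (-1) - 1)) ^ #s := by
        gcongr
    _ = Real.exp (-((1 / 2 - Real.exp (-1)) * (#s * p))) := by
        rw [← Real.exp_nat_mul, ← Real.exp_add]
        ring_nf

end Bernoulli

section CrossPairs

variable {α : Type*} [Fintype α] [DecidableEq α]

def crossPairs (A : Finset α) : Finset (Sym2 α) := (A ×ˢ Aᶜ).image fun x => s(x.1, x.2)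

lemma mem_crossPairs {A : Finset α} {e : Sym2 α} :
    e ∈ crossPairs A ↔ ∃ i ∈ A, ∃ j ∉ A, e = s(i, j) := by
  simp only [crossPairs, mem_image, mem_product, mem_compl, Prod.exists]
  constructor
  · rintro ⟨i, j, ⟨hi, hj⟩, rfl⟩
    exact ⟨i, hi, j, hj, rfl⟩
  · rintro ⟨i, hi, j, hj, rfl⟩
    exact ⟨i, j, ⟨hi, hj⟩, rfl⟩

lemma not_isDiag_of_mem_crossPairs {A : Finset α} {e : Sym2 α} (he : e ∈ crossPairs A) :
    ¬ e.IsDiag := by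
  obtain ⟨i, hi, j, hj, rfl⟩ := mem_crossPairs.1 he
  rw [Sym2.mk_isDiag_iff]
  rintro rfl
  exact hj hi

lemma card_crossPairs (A : Finset α) : #(crossPairs A) = #A * (Fintype.card α - #A) := by
  rw [crossPairs, card_image_of_injOn, card_product, card_compl]
  rintro ⟨i, j⟩ hij ⟨i', j'⟩ hij' h
  simp only [coe_product, Set.mem_prod, mem_coe, mem_compl] at hij hij'
  rcases Sym2.eq_iff.1 h with ⟨h1, h2⟩ | ⟨rfl, -⟩
  · exact Prod.ext h1 h2
  · exact absurd hij.1 hij'.2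

lemma cast_card_crossPairs (A : Finset α) :
    (#(crossPairs A) : ℝ)
      = #A / Fintype.card α * (1 - #A / Fintype.card α) * Fintype.card α ^ 2 := by
  have hA : (#A : ℝ) ≤ Fintype.card α := by exact_mod_cast card_le_univ A
  rw [card_crossPairs, Nat.cast_mul, Nat.cast_sub (card_le_univ A)]
  rcases eq_or_ne (Fintype.card α : ℝ) 0 with h | h
  · have hA0 : (#A : ℝ) = 0 := le_antisymm (h ▸ hA) (Nat.cast_nonneg _)
    simp [h, hA0]
  · field_simp

lemma mul_one_sub_mul_sq_le_card_crossPairs {A : Finset α} {ρ : ℝ}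
    (h₁ : ρ ≤ #A / Fintype.card α) (h₂ : #A / Fintype.card α ≤ 1 - ρ) :
    ρ * (1 - ρ) * Fintype.card α ^ 2 ≤ #(crossPairs A) := by
  have hx : 0 ≤ (#A / Fintype.card α - ρ) * (1 - ρ - #A / Fintype.card α) :=
    mul_nonneg (by linarith) (by linarith)
  rw [cast_card_crossPairs]
  nlinarith [sq_nonneg (Fintype.card α : ℝ)]

end CrossPairs

lemma crossEdges_eq_sum {m : ℕ} {Ω : Type*} (X : Sym2 (Fin m) → Ω → Bool)
    (A : Finset (Fin m)) (ω : Ω) :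
    (crossEdges X A ω : ℝ) = ∑ e ∈ crossPairs A, if X e ω then (1 : ℝ) else 0 := by
  have hset : {e : Sym2 (Fin m) | (∃ i ∈ A, ∃ j ∉ A, e = s(i, j)) ∧ X e ω = true}
      = ↑((crossPairs A).filter fun e => X e ω = true) := by
    ext e
    simp [mem_crossPairs]
  rw [crossEdges, hset, Set.ncard_coe_finset, card_filter]
  push_cast
  rfl

lemma measure_crossEdges_lt_half_mean_le {m : ℕ} {Ω : Type*} [MeasurableSpace Ω]
    {μ : Measure Ω} [IsProbabilityMeasure μ] {X : Sym2 (Fin m) → Ω → Bool}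
    (hX : ∀ e, Measurable (X e)) (hind : iIndepFun X μ) {p : ℝ} (hp : 0 ≤ p)
    (hμX : ∀ e : Sym2 (Fin m), ¬ e.IsDiag → μ {ω | X e ω = true} = ENNReal.ofReal p)
    (A : Finset (Fin m)) :
    μ {ω | (crossEdges X A ω : ℝ) < #(crossPairs A) * p / 2}
      ≤ ENNReal.ofReal (Real.exp (-((1 / 2 - Real.exp (-1)) * (#(crossPairs A) * p)))) := by
  refine (measure_mono fun ω (hω : (crossEdges X A ω : ℝ) < _) => ?_).trans
    (measure_sum_ite_le_half_mean_le hX hind _ hp fun e he =>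
      hμX e (not_isDiag_of_mem_crossPairs he))
  rw [crossEdges_eq_sum] at hω
  exact hω.le

lemma two_pow_mul_exp_le {N m : ℕ} {a Pr : ℝ} (hN : 0 < N) (hmN : (m : ℝ) = a * N / 4)
    (haPr : 256 < a * Pr) :
    2 ^ m * Real.exp (-((1 / 2 - Real.exp (-1)) * (21 / 100 * m ^ 2 * (Pr / N))))
      ≤ N * Real.exp (-(3 / 10) * a * N / 4) := by
  have hm : (0 : ℝ) ≤ m := m.cast_nonneg
  have hmp : 64 < m * (Pr / N) := by
    rw [show (m : ℝ) * (Pr / N) = a * Pr / 4 by rw [hmN]; field_simp]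
    linarith
  have hc : (13 / 100 : ℝ) ≤ 1 / 2 - Real.exp (-1) := by linarith [Real.exp_neg_one_lt_d9]
  have hlog : Real.log 2 ≤ 7 / 10 := by linarith [Real.log_two_lt_d9]
  have h2 : (2 : ℝ) ^ m = Real.exp (m * Real.log 2) := by
    rw [Real.exp_nat_mul, Real.exp_log two_pos]
  rw [show -(3 / 10) * a * N / 4 = -(3 / 10) * (m : ℝ) by rw [hmN]; ring, h2, ← Real.exp_add]
  refine (Real.exp_le_exp.2 ?_).trans
    (le_mul_of_one_le_left (Real.exp_pos _).le (by exact_mod_cast hN))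
  nlinarith [mul_le_mul_of_nonneg_right hc (by positivity : 0 ≤ 21 / 100 * m * (m * (Pr / N))),
    mul_le_mul_of_nonneg_left hlog hm]

/-- Static core of Proposition `catorbound`: in an Erdős–Rényi graph on `m = aN/4` vertices
with edge probability `P/N`, provided `aP > 256`, there is a universal `ρ₀ ∈ (1/4,1/2)` such
that with probability at least `1 - N e^{-ρ₀ a N / 4}` every `A ⊆ 𝒮` with
`ρ_A ∈ [ρ₀, 1-ρ₀]` has at least `ρ_A (1-ρ_A) a² P N / 32` cross edges. -/
theorem stmt0 :
    ∃ ρ₀ : ℝ, ρ₀ ∈ Set.Ioo (1 / 4 : ℝ) (1 / 2) ∧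
      ∀ (N : ℕ) (a Pr : ℝ) (m : ℕ) (Ω : Type) (_ : MeasurableSpace Ω) (μ : Measure Ω),
        IsProbabilityMeasure μ → 0 < N → 0 < a → a < 1 / 2 → 0 < m →
        (m : ℝ) = a * N / 4 → 0 < Pr → Pr ≤ N → 256 < a * Pr →
        ∀ X : Sym2 (Fin m) → Ω → Bool,
        (∀ e, Measurable (X e)) →
        iIndepFun X μ →
        (∀ e : Sym2 (Fin m), ¬ e.IsDiag →
          μ {ω | X e ω = true} = ENNReal.ofReal (Pr / N)) →
        μ {ω | ∃ A : Finset (Fin m),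
            ρ₀ ≤ (A.card : ℝ) / m ∧ (A.card : ℝ) / m ≤ 1 - ρ₀ ∧
            (crossEdges X A ω : ℝ) <
              ((A.card : ℝ) / m) * (1 - (A.card : ℝ) / m) * a ^ 2 * Pr * N / 32}
          ≤ ENNReal.ofReal (N * Real.exp (-ρ₀ * a * N / 4)) := by
  refine ⟨3 / 10, by norm_num, ?_⟩
  intro N a Pr m Ω _ μ _ hN _ _ _ hmN hPr _ haPr X hX hind hXp
  set p := Pr / N with hp
  have hc : 0 ≤ 1 / 2 - Real.exp (-1) := by linarith [Real.exp_neg_one_lt_d9]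
  set c := 1 / 2 - Real.exp (-1)
  set T := univ.filter fun A : Finset (Fin m) =>
    3 / 10 ≤ (#A : ℝ) / m ∧ (#A : ℝ) / m ≤ 1 - 3 / 10
  have hthreshold (A : Finset (Fin m)) :
      (#A : ℝ) / m * (1 - (#A : ℝ) / m) * a ^ 2 * Pr * N / 32 = #(crossPairs A) * p / 2 := by
    rw [cast_card_crossPairs, Fintype.card_fin, hp, show a = 4 * m / N by field_simp; linarith]
    field_simp
    ring
  have htail (A) (hA : A ∈ T) : μ {ω | (crossEdges X A ω : ℝ) < #(crossPairs A) * p / 2}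
      ≤ ENNReal.ofReal (Real.exp (-(c * (21 / 100 * m ^ 2 * p)))) := by
    obtain ⟨-, h₁, h₂⟩ := mem_filter.1 hA
    have hcard := mul_one_sub_mul_sq_le_card_crossPairs (A := A) (ρ := 3 / 10)
      (by simpa using h₁) (by simpa using h₂)
    refine (measure_crossEdges_lt_half_mean_le hX hind (by positivity) hXp A).trans ?_
    gcongr
    rw [Fintype.card_fin] at hcard
    linarith
  calc _ ≤ μ (⋃ A ∈ T, {ω | (crossEdges X A ω : ℝ) < #(crossPairs A) * p / 2}) :=
        measure_mono <| by
          rintro ω ⟨A, h₁, h₂, hlt⟩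
          exact Set.mem_biUnion (mem_filter.2 ⟨mem_univ _, h₁, h₂⟩) (hthreshold A ▸ hlt)
    _ ≤ #T • ENNReal.ofReal (Real.exp (-(c * (21 / 100 * m ^ 2 * p)))) :=
        (measure_biUnion_finset_le _ _).trans (sum_le_card_nsmul _ _ _ htail)
    _ ≤ ENNReal.ofReal (2 ^ m * Real.exp (-(c * (21 / 100 * m ^ 2 * p)))) := by
        rw [ENNReal.ofReal_mul (by positivity), nsmul_eq_mul, ENNReal.ofReal_pow zero_le_two]
        gcongr
        exact_mod_cast (card_filter_le _ _).trans (by simp)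
    _ ≤ ENNReal.ofReal (N * Real.exp (-(3 / 10) * a * N / 4)) :=
        ENNReal.ofReal_le_ofReal (two_pow_mul_exp_le hN hmN haPr)
end

section
/- There exists a constant C > 0 such that for all real W ≥ C and all t ∈ (0,1], one has e^{−W/2}·e^{−t}·(1 + Σ_{n=1}^{⌊W⌋−1} (eW/n)^n · t^n / n!) ≤ C·e^{−W/4}. -/
open Real Finset

/-- Analytic estimate from the proof of Lemma `lemmakeylocal`:
`e^{-W/2} e^{-t} (1 + Σ_{n=1}^{⌊W⌋-1} (eW/n)^n t^n / n!) ≤ C e^{-W/4}` for `W ≥ C`, `t ∈ (0,1]`. -/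
theorem stmt3 :
    ∃ C : ℝ, 0 < C ∧ ∀ W : ℝ, C ≤ W → ∀ t : ℝ, 0 < t → t ≤ 1 →
      Real.exp (-W/2) * Real.exp (-t) *
        (1 + ∑ n ∈ Finset.Icc 1 (⌊W⌋₊ - 1),
          (Real.exp 1 * W / n) ^ n * t ^ n / (n.factorial : ℝ))
      ≤ C * Real.exp (-W/4) := by
  refine ⟨1 + 8 * Real.exp 8, by positivity, ?_⟩
  intro W hW t ht ht1
  have he8 := Real.exp_pos 8
  have hW0 : (0:ℝ) < W := by nlinarith
  set s := Real.sqrt W with hs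
  have hs0 : 0 ≤ s := Real.sqrt_nonneg W
  have hs2 : s ^ 2 = W := Real.sq_sqrt hW0.le
  -- pointwise bound on each summand
  have hterm : ∀ n ∈ Finset.Icc 1 (⌊W⌋₊ - 1),
      (Real.exp 1 * W / n) ^ n * t ^ n / (n.factorial : ℝ) ≤ Real.exp (2 * s) := by
    intro n hn
    obtain ⟨hn1, -⟩ := Finset.mem_Icc.mp hn
    have hnpos : (0:ℝ) < n := by exact_mod_cast hn1
    have hfac : (0:ℝ) < n.factorial := by exact_mod_cast n.factorial_pos
    have htn : t ^ n ≤ 1 := pow_le_one₀ ht.le ht1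
    -- s^n / n! ≤ exp s
    have hsn : s ^ n / (n.factorial : ℝ) ≤ Real.exp s := by
      have h1 := Finset.single_le_sum (f := fun i => s ^ i / (i.factorial : ℝ))
        (fun i _ => by positivity) (Finset.self_mem_range_succ n)
      have h2 := Real.sum_le_exp_of_nonneg hs0 (n + 1)
      exact h1.trans h2
    -- e * s / n ≤ exp (s / n)
    have hkey : Real.exp 1 * s / n ≤ Real.exp (s / n) := by
      have h := Real.add_one_le_exp (s / n - 1)
      calc Real.exp 1 * s / n = Real.exp 1 * (s / n - 1 + 1) := by ring
        _ ≤ Real.exp 1 * Real.exp (s / n - 1) :=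
            mul_le_mul_of_nonneg_left h (Real.exp_pos 1).le
        _ = Real.exp (s / n) := by rw [← Real.exp_add]; ring_nf
    have hkey0 : 0 ≤ Real.exp 1 * s / n := by positivity
    have hsplit : (Real.exp 1 * W / n) ^ n = (Real.exp 1 * s / n) ^ n * s ^ n := by
      rw [← mul_pow]; congr 1; rw [← hs2]; ring
    have hnn : Real.exp (s / n) ^ n = Real.exp s := by
      rw [← Real.exp_nat_mul]
      congr 1
      field_simp
    calc (Real.exp 1 * W / n) ^ n * t ^ n / (n.factorial : ℝ)
        ≤ (Real.exp 1 * W / n) ^ n * 1 / (n.factorial : ℝ) := by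
          gcongr
      _ = (Real.exp 1 * s / n) ^ n * (s ^ n / (n.factorial : ℝ)) := by
          rw [hsplit]; ring
      _ ≤ Real.exp (s / n) ^ n * Real.exp s := by
          gcongr
      _ = Real.exp s * Real.exp s := by rw [hnn]
      _ = Real.exp (2 * s) := by rw [← Real.exp_add]; ring_nf
  -- sum bound
  have hcard : ((Finset.Icc 1 (⌊W⌋₊ - 1)).card : ℝ) ≤ W := by
    rw [Nat.card_Icc]
    have h1 : (⌊W⌋₊ - 1 + 1 - 1 : ℕ) ≤ ⌊W⌋₊ := by omega
    calc ((⌊W⌋₊ - 1 + 1 - 1 : ℕ) : ℝ) ≤ (⌊W⌋₊ : ℝ) := by exact_mod_cast h1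
      _ ≤ W := Nat.floor_le hW0.le
  have hsum : ∑ n ∈ Finset.Icc 1 (⌊W⌋₊ - 1),
      (Real.exp 1 * W / n) ^ n * t ^ n / (n.factorial : ℝ) ≤ W * Real.exp (2 * s) := by
    calc ∑ n ∈ Finset.Icc 1 (⌊W⌋₊ - 1),
        (Real.exp 1 * W / n) ^ n * t ^ n / (n.factorial : ℝ)
        ≤ (Finset.Icc 1 (⌊W⌋₊ - 1)).card • Real.exp (2 * s) :=
          Finset.sum_le_card_nsmul _ _ _ hterm
      _ = ((Finset.Icc 1 (⌊W⌋₊ - 1)).card : ℝ) * Real.exp (2 * s) := by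
          rw [nsmul_eq_mul]
      _ ≤ W * Real.exp (2 * s) := by gcongr
  have het : Real.exp (-t) ≤ 1 := Real.exp_le_one_iff.mpr (by linarith)
  have hS0 : (0:ℝ) ≤ ∑ n ∈ Finset.Icc 1 (⌊W⌋₊ - 1),
      (Real.exp 1 * W / n) ^ n * t ^ n / (n.factorial : ℝ) :=
    Finset.sum_nonneg fun n _ => by positivity
  have step1 : Real.exp (-W/2) * Real.exp (-t) *
      (1 + ∑ n ∈ Finset.Icc 1 (⌊W⌋₊ - 1),
        (Real.exp 1 * W / n) ^ n * t ^ n / (n.factorial : ℝ))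
      ≤ Real.exp (-W/2) * (1 + W * Real.exp (2 * s)) := by
    have h1 : Real.exp (-W/2) * Real.exp (-t) ≤ Real.exp (-W/2) :=
      mul_le_of_le_one_right (Real.exp_pos _).le het
    calc Real.exp (-W/2) * Real.exp (-t) *
        (1 + ∑ n ∈ Finset.Icc 1 (⌊W⌋₊ - 1),
          (Real.exp 1 * W / n) ^ n * t ^ n / (n.factorial : ℝ))
        ≤ Real.exp (-W/2) *
          (1 + ∑ n ∈ Finset.Icc 1 (⌊W⌋₊ - 1),
            (Real.exp 1 * W / n) ^ n * t ^ n / (n.factorial : ℝ)) :=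
          mul_le_mul_of_nonneg_right h1 (by linarith)
      _ ≤ Real.exp (-W/2) * (1 + W * Real.exp (2 * s)) := by
          gcongr
  -- final numeric estimate
  have hA : Real.exp (-W/2) ≤ Real.exp (-W/4) := Real.exp_le_exp.mpr (by linarith)
  have hB : W * Real.exp (2 * s) * Real.exp (-W/2) ≤ 8 * Real.exp 8 * Real.exp (-W/4) := by
    have h2s : Real.exp (2 * s + -W/2) ≤ Real.exp (8 - 3*W/8) :=
      Real.exp_le_exp.mpr (by nlinarith [sq_nonneg (s - 8)])
    have hW8 : W ≤ 8 * Real.exp (W/8) := by nlinarith [Real.add_one_le_exp (W/8)]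
    calc W * Real.exp (2 * s) * Real.exp (-W/2)
        = W * Real.exp (2 * s + -W/2) := by rw [Real.exp_add]; ring
      _ ≤ W * Real.exp (8 - 3*W/8) := by gcongr
      _ ≤ 8 * Real.exp (W/8) * Real.exp (8 - 3*W/8) := by
          gcongr
      _ = 8 * Real.exp (W/8 + (8 - 3*W/8)) := by rw [Real.exp_add]; ring
      _ = 8 * Real.exp (8 + -W/4) := by ring_nf
      _ = 8 * Real.exp 8 * Real.exp (-W/4) := by rw [Real.exp_add]; ring
  calc Real.exp (-W/2) * Real.exp (-t) *
      (1 + ∑ n ∈ Finset.Icc 1 (⌊W⌋₊ - 1),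
        (Real.exp 1 * W / n) ^ n * t ^ n / (n.factorial : ℝ))
      ≤ Real.exp (-W/2) * (1 + W * Real.exp (2 * s)) := step1
    _ = Real.exp (-W/2) + W * Real.exp (2 * s) * Real.exp (-W/2) := by ring
    _ ≤ Real.exp (-W/4) + 8 * Real.exp 8 * Real.exp (-W/4) := by linarith
    _ = (1 + 8 * Real.exp 8) * Real.exp (-W/4) := by ring
end

section
/- For every q ∈ (0,1), the relative entropy D(q/2 ‖ q) := (q/2)·log((q/2)/q) + (1 − q/2)·log((1 − q/2)/(1 − q)) satisfies D(q/2 ‖ q) ≥ −log 2 − (1/2)·log(1 − q). -/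
/-- For every `q ∈ (0,1)` the Bernoulli relative entropy `D(q/2 ‖ q)` satisfies
`D(q/2 ‖ q) ≥ -log 2 - (1/2) log (1-q)`. -/
theorem stmt5 (q : ℝ) (hq0 : 0 < q) (hq1 : q < 1) :
    (q / 2) * Real.log ((q / 2) / q) + (1 - q / 2) * Real.log ((1 - q / 2) / (1 - q))
      ≥ -Real.log 2 - (1 / 2) * Real.log (1 - q) := by
  have hq2 : (0:ℝ) < 1 - q / 2 := by linarith
  have hq3 : (0:ℝ) < 1 - q := by linarith
  have h1 : (q / 2) / q = 1 / 2 := by field_simp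
  have h2 : Real.log ((q / 2) / q) = -Real.log 2 := by
    rw [h1, one_div, Real.log_inv]
  have h3 : Real.log ((1 - q / 2) / (1 - q)) = Real.log (1 - q / 2) - Real.log (1 - q) :=
    Real.log_div (ne_of_gt hq2) (ne_of_gt hq3)
  have h4 : Real.log 2 + Real.log (1 - q / 2) = Real.log (2 * (1 - q / 2)) :=
    (Real.log_mul (by norm_num) (ne_of_gt hq2)).symm
  have h5 : 0 ≤ Real.log (2 * (1 - q / 2)) := Real.log_nonneg (by linarith)
  have h6 : Real.log (1 - q) ≤ 0 := Real.log_nonpos (by linarith) (by linarith)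
  have hA : 0 ≤ (1 - q / 2) * (Real.log 2 + Real.log (1 - q / 2)) := by
    rw [h4]; positivity
  have hB : ((1 - q) / 2) * Real.log (1 - q) ≤ 0 :=
    mul_nonpos_of_nonneg_of_nonpos (by linarith) h6
  rw [h2, h3]
  nlinarith [hA, hB]
end

section
/- Let κ > 0 and p ∈ (0,1]. Let C₀, C₁, C₂, … be i.i.d. Bernoulli random variables with success probability p, and independently let (E_k)_{k≥1} be i.i.d. exponential random variables with rate κ, with T_k = E_1 + ⋯ + E_k. Define δ = 0 if C₀ = 1, and otherwise δ = T_K where K = min{k ≥ 1 : C_k = 1}. Then E[e^{−δ/4}] = (1 + 4κ)·p / (1 + 4κp), and in particular E[e^{−δ/4}] ≤ (1 + 4κ)·p. -/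
/-!
Split `Ω` according to the index `K` of the first success among `C₀, C₁, …`. The events
`{K = k}` have probabilities `(1 - p)^k p`, so they cover `Ω` up to a null set, and they are
independent of the `E i`. On `{K = k}` we have `δ = E₀ + ⋯ + E_{k-1}`, whose Laplace transform at
`t` is `(κ / (κ + t))^k`; hence `E[e^{-tδ}] = ∑ₖ p ((1 - p) κ / (κ + t))^k = p (κ + t) / (t + κ p)`,
and `t = 1/4` gives the claim.
-/

open MeasureTheory ProbabilityTheory Finset

open scoped ENNReal

lemma ENNReal.tsum_ofReal_pow_mul_ofReal {a c : ℝ} (ha0 : 0 ≤ a) (ha1 : a < 1) :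
    ∑' k : ℕ, ENNReal.ofReal a ^ k * ENNReal.ofReal c = ENNReal.ofReal (c / (1 - a)) := by
  rw [ENNReal.tsum_mul_right, ENNReal.tsum_geometric, ← ENNReal.ofReal_one,
    ← ENNReal.ofReal_sub _ ha0, ENNReal.ofReal_div_of_pos (by linarith), div_eq_mul_inv, mul_comm]

namespace ProbabilityTheory

lemma lintegral_exp_neg_mul_expMeasure {κ t : ℝ} (hκ : 0 < κ) (hκt : 0 < κ + t) :
    ∫⁻ x, ENNReal.ofReal (Real.exp (-(t * x))) ∂expMeasure κ = ENNReal.ofReal (κ / (κ + t)) := by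
  have hdensity : ∀ x, exponentialPDF κ x * ENNReal.ofReal (Real.exp (-(t * x)))
      = ENNReal.ofReal (κ / (κ + t)) * exponentialPDF (κ + t) x := by
    intro x
    rcases le_or_gt 0 x with hx | hx
    · rw [exponentialPDF_of_nonneg hx, exponentialPDF_of_nonneg hx,
        ← ENNReal.ofReal_mul (by positivity), ← ENNReal.ofReal_mul (by positivity)]
      congr 1
      rw [mul_assoc, ← Real.exp_add]
      field_simp
      ring_nf
    · simp [exponentialPDF_of_neg hx]
  have hpdf (r : ℝ) : Measurable (exponentialPDF r) :=
    (measurable_exponentialPDFReal r).ennreal_ofReal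
  rw [show expMeasure κ = volume.withDensity (exponentialPDF κ) from rfl,
    lintegral_withDensity_eq_lintegral_mul _ (hpdf κ) (by fun_prop)]
  simp only [Pi.mul_apply, hdensity]
  rw [lintegral_const_mul _ (hpdf _), lintegral_exponentialPDF_eq_one hκt, mul_one]

variable {Ω : Type*} [MeasurableSpace Ω] {μ : Measure Ω}

lemma iIndepFun.lintegral_exp_neg_mul_sum_of_map_eq_expMeasure {ι : Type*} {E : ι → Ω → ℝ}
    {κ t : ℝ} (hκ : 0 < κ) (hκt : 0 < κ + t) (hE : iIndepFun E μ)
    (hmeas : ∀ i, Measurable (E i)) (hlaw : ∀ i, μ.map (E i) = expMeasure κ) (s : Finset ι) :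
    ∫⁻ ω, ENNReal.ofReal (Real.exp (-(t * ∑ i ∈ s, E i ω))) ∂μ
      = ENNReal.ofReal (κ / (κ + t)) ^ s.card := by
  have hfactor : ∀ i, ∫⁻ ω, ENNReal.ofReal (Real.exp (-(t * E i ω))) ∂μ
      = ENNReal.ofReal (κ / (κ + t)) := fun i => by
    rw [← lintegral_map (f := fun x => ENNReal.ofReal (Real.exp (-(t * x)))) (by fun_prop)
      (hmeas i), hlaw i, lintegral_exp_neg_mul_expMeasure hκ hκt]
  have hprod : ∀ ω, ENNReal.ofReal (Real.exp (-(t * ∑ i ∈ s, E i ω)))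
      = ∏ i ∈ s, ENNReal.ofReal (Real.exp (-(t * E i ω))) := fun ω => by
    rw [← ENNReal.ofReal_prod_of_nonneg fun _ _ => (Real.exp_pos _).le, ← Real.exp_sum, mul_sum,
      ← sum_neg_distrib]
  have hfactorize := lintegral_prod_eq_prod_lintegral_of_indepFun s _
    (hE.comp (fun _ x => ENNReal.ofReal (Real.exp (-(t * x)))) fun _ => by fun_prop)
    fun i => (by fun_prop : Measurable fun x => ENNReal.ofReal (Real.exp (-(t * x)))).comp (hmeas i)
  simp only [Function.comp_apply, hfactor, prod_const] at hfactorize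
  simp_rw [hprod, hfactorize]

lemma iIndepFun.indepFun_sumElim {ι ι' β : Type*} [MeasurableSpace β] {X : ι → Ω → β}
    {Y : ι' → Ω → β} (h : iIndepFun (Sum.elim X Y) μ) (hX : ∀ i, Measurable (X i))
    (hY : ∀ j, Measurable (Y j)) :
    IndepFun (fun ω i => X i ω) (fun ω j => Y j ω) μ := by
  have hle : ∀ k, MeasurableSpace.comap (Sum.elim X Y k) inferInstance ≤ ‹MeasurableSpace Ω›
    | .inl i => (hX i).comap_le
    | .inr j => (hY j).comap_le
  have hindep := indep_iSup_of_disjoint hle h.iIndep Set.isCompl_range_inl_range_inr.disjoint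
  simp only [iSup_range, Sum.elim_inl, Sum.elim_inr] at hindep
  rw [IndepFun_iff_Indep]
  simpa only [MeasurableSpace.pi, MeasurableSpace.comap_iSup, MeasurableSpace.comap_comp,
    Function.comp_def] using hindep

lemma setLIntegral_preimage_eq_mul_of_indepFun {β γ : Type*} [MeasurableSpace β]
    [MeasurableSpace γ] {X : Ω → β} {Y : Ω → γ} (hXY : IndepFun X Y μ) (hX : Measurable X)
    (hY : Measurable Y) {s : Set β} (hs : MeasurableSet s) {g : γ → ℝ≥0∞} (hg : Measurable g) :
    ∫⁻ ω in X ⁻¹' s, g (Y ω) ∂μ = μ (X ⁻¹' s) * ∫⁻ ω, g (Y ω) ∂μ := by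
  have hindicator : ∀ ω, (X ⁻¹' s).indicator (fun ω => g (Y ω)) ω
      = s.indicator 1 (X ω) * g (Y ω) := fun ω => by
    by_cases hω : X ω ∈ s <;> simp [hω]
  rw [← lintegral_indicator (hX hs), ← lintegral_indicator_one (hX hs)]
  simp_rw [hindicator]
  exact lintegral_mul_eq_lintegral_mul_lintegral_of_indepFun
    ((measurable_one.indicator hs).comp hX) (hg.comp hY) (hXY.comp (measurable_one.indicator hs) hg)

/-- The event `{K = k}` of the header is the preimage of `firstSuccessAt k` under the trajectory
`ω ↦ (C j ω)ⱼ`. -/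
def firstSuccessAt (k : ℕ) : Set (ℕ → ℝ) := {c | (∀ j < k, c j = 0) ∧ c k = 1}

lemma measurableSet_firstSuccessAt (k : ℕ) : MeasurableSet (firstSuccessAt k) := by
  unfold firstSuccessAt
  measurability

lemma pairwise_disjoint_firstSuccessAt : Pairwise (Function.onFun Disjoint firstSuccessAt) := by
  have key : ∀ k l, k < l → Disjoint (firstSuccessAt k) (firstSuccessAt l) :=
    fun k l hkl => Set.disjoint_left.2 fun c hk hl => by simpa [hk.2] using hl.1 k hkl
  intro k l hkl
  rcases hkl.lt_or_gt with h | h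
  exacts [key k l h, (key l k h).symm]

lemma ite_sum_range_sInf_eq_of_mem_firstSuccessAt {c : ℕ → ℝ} {k : ℕ}
    (hc : c ∈ firstSuccessAt k) (e : ℕ → ℝ) :
    (if c 0 = 1 then 0 else ∑ i ∈ range (sInf {m : ℕ | 1 ≤ m ∧ c m = 1}), e i)
      = ∑ i ∈ range k, e i := by
  rcases Nat.eq_zero_or_pos k with rfl | hk
  · simp [hc.2]
  have hsInf : sInf {m : ℕ | 1 ≤ m ∧ c m = 1} = k := by
    refine le_antisymm (Nat.sInf_le ⟨hk, hc.2⟩) (le_csInf ⟨k, hk, hc.2⟩ fun m hm => ?_)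
    by_contra! hmk
    simp [hc.1 m hmk] at hm
  rw [if_neg (by simp [hc.1 0 hk]), hsInf]

section BernoulliSequence

variable {C : ℕ → Ω → ℝ} {p : ℝ}

lemma iIndepFun.measure_preimage_firstSuccessAt (hC : iIndepFun C μ)
    (hC1 : ∀ i, μ {ω | C i ω = 1} = ENNReal.ofReal p)
    (hC0 : ∀ i, μ {ω | C i ω = 0} = ENNReal.ofReal (1 - p)) (k : ℕ) :
    μ ((fun ω j => C j ω) ⁻¹' firstSuccessAt k) = ENNReal.ofReal (1 - p) ^ k * ENNReal.ofReal p := by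
  classical
  let value : ℕ → Set ℝ := fun j => if j < k then {0} else {1}
  have hpreimage : (fun ω j => C j ω) ⁻¹' firstSuccessAt k = ⋂ j ∈ range (k + 1), C j ⁻¹' value j := by
    ext ω
    simp only [firstSuccessAt, Set.mem_preimage, Set.mem_ofPred_eq, Set.mem_iInter, mem_range,
      value]
    constructor
    · rintro ⟨hlt, hk⟩ j hj
      split_ifs with hjk
      exacts [hlt j hjk, by rw [show j = k by omega]; exact hk]
    · intro h
      refine ⟨fun j hj => by simpa [hj] using h j (by omega), by simpa using h k (by omega)⟩
  have hfail : ∀ j ∈ range k, μ (C j ⁻¹' value j) = ENNReal.ofReal (1 - p) := fun j hj => by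
    simp only [value, if_pos (mem_range.1 hj)]
    exact hC0 j
  have hsuccess : μ (C k ⁻¹' value k) = ENNReal.ofReal p := by
    simp only [value, lt_irrefl, if_false]
    exact hC1 k
  rw [hpreimage, hC.measure_inter_preimage_eq_mul _ fun j _ => by
    dsimp only [value]; split_ifs <;> exact measurableSet_singleton _, prod_range_succ,
    prod_congr rfl hfail, prod_const, card_range, hsuccess]

lemma iIndepFun.ae_mem_iUnion_preimage_firstSuccessAt [IsProbabilityMeasure μ] (hC : iIndepFun C μ)
    (hmeas : ∀ i, Measurable (C i)) (hp0 : 0 < p) (hp1 : p ≤ 1)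
    (hC1 : ∀ i, μ {ω | C i ω = 1} = ENNReal.ofReal p)
    (hC0 : ∀ i, μ {ω | C i ω = 0} = ENNReal.ofReal (1 - p)) :
    ∀ᵐ ω ∂μ, ω ∈ ⋃ k, (fun ω j => C j ω) ⁻¹' firstSuccessAt k := by
  have hA : ∀ k, MeasurableSet ((fun ω j => C j ω) ⁻¹' firstSuccessAt k) := fun k =>
    measurable_pi_lambda _ hmeas (measurableSet_firstSuccessAt k)
  rw [ae_mem_iff_measure_eq (MeasurableSet.iUnion hA).nullMeasurableSet, measure_univ,
    measure_iUnion (pairwise_disjoint_firstSuccessAt.mono fun _ _ h => h.preimage _) hA]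
  simp_rw [hC.measure_preimage_firstSuccessAt hC1 hC0]
  rw [ENNReal.tsum_ofReal_pow_mul_ofReal (by linarith) (by linarith), sub_sub_cancel,
    div_self hp0.ne', ENNReal.ofReal_one]

end BernoulliSequence

theorem lintegral_exp_neg_mul_of_firstSuccessAt [IsProbabilityMeasure μ] {C E : ℕ → Ω → ℝ}
    {δ : Ω → ℝ} {κ p t : ℝ} (hκ : 0 < κ) (ht : 0 ≤ t) (hp0 : 0 < p) (hp1 : p ≤ 1)
    (hC : iIndepFun C μ) (hmeasC : ∀ i, Measurable (C i))
    (hC1 : ∀ i, μ {ω | C i ω = 1} = ENNReal.ofReal p)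
    (hC0 : ∀ i, μ {ω | C i ω = 0} = ENNReal.ofReal (1 - p))
    (hE : iIndepFun E μ) (hmeasE : ∀ i, Measurable (E i)) (hlaw : ∀ i, μ.map (E i) = expMeasure κ)
    (hCE : IndepFun (fun ω j => C j ω) (fun ω j => E j ω) μ)
    (hδ : ∀ k ω, (fun j => C j ω) ∈ firstSuccessAt k → δ ω = ∑ i ∈ range k, E i ω) :
    ∫⁻ ω, ENNReal.ofReal (Real.exp (-(t * δ ω))) ∂μ
      = ENNReal.ofReal (p * (κ + t) / (t + κ * p)) := by
  set A : ℕ → Set Ω := fun k => (fun ω j => C j ω) ⁻¹' firstSuccessAt k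
  have hA : ∀ k, MeasurableSet (A k) := fun k =>
    measurable_pi_lambda _ hmeasC (measurableSet_firstSuccessAt k)
  have hκt : 0 < κ + t := by linarith
  set r := κ / (κ + t)
  have hr1 : r ≤ 1 := (div_le_one hκt).2 (by linarith)
  have hterm : ∀ k, ∫⁻ ω in A k, ENNReal.ofReal (Real.exp (-(t * δ ω))) ∂μ
      = ENNReal.ofReal ((1 - p) * r) ^ k * ENNReal.ofReal p := fun k => by
    rw [setLIntegral_congr_fun (hA k) fun ω hω => by rw [hδ k ω hω],
      setLIntegral_preimage_eq_mul_of_indepFun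
        (g := fun e => ENNReal.ofReal (Real.exp (-(t * ∑ i ∈ range k, e i)))) hCE
        (measurable_pi_lambda _ hmeasC) (measurable_pi_lambda _ hmeasE)
        (measurableSet_firstSuccessAt k) (by fun_prop),
      hE.lintegral_exp_neg_mul_sum_of_map_eq_expMeasure hκ hκt hmeasE hlaw,
      hC.measure_preimage_firstSuccessAt hC1 hC0, card_range,
      ENNReal.ofReal_mul (by linarith), mul_pow]
    ring
  calc ∫⁻ ω, ENNReal.ofReal (Real.exp (-(t * δ ω))) ∂μ
      = ∫⁻ ω in ⋃ k, A k, ENNReal.ofReal (Real.exp (-(t * δ ω))) ∂μ := by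
        rw [Measure.restrict_eq_self_of_ae_mem
          (hC.ae_mem_iUnion_preimage_firstSuccessAt hmeasC hp0 hp1 hC1 hC0)]
    _ = ∑' k, ENNReal.ofReal ((1 - p) * r) ^ k * ENNReal.ofReal p := by
        rw [lintegral_iUnion hA (pairwise_disjoint_firstSuccessAt.mono fun _ _ h => h.preimage _)]
        simp_rw [hterm]
    _ = ENNReal.ofReal (p * (κ + t) / (t + κ * p)) := by
        rw [ENNReal.tsum_ofReal_pow_mul_ofReal (by positivity) (by nlinarith)]
        have hdenominator : 1 - (1 - p) * r = (t + κ * p) / (κ + t) := by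
          simp only [r]; field_simp; ring
        rw [hdenominator, div_div_eq_mul_div]

end ProbabilityTheory

/-- Model for the first time `δ` a dynamical edge is present: the edge is initially present
with probability `p` (event `C₀ = 1`), updates at the points `T_k = E_1 + ⋯ + E_k` of a
Poisson process of intensity `κ`, and after each update is present independently with
probability `p`; `δ = 0` if `C₀ = 1` and otherwise `δ = T_K` with
`K = min {k ≥ 1 : C_k = 1}`. Then `E[e^{-δ/4}] = (1+4κ)p/(1+4κp) ≤ (1+4κ)p`. -/
theorem stmt7 {Ω : Type*} [MeasurableSpace Ω] (μ : Measure Ω) [IsProbabilityMeasure μ]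
    (κ p : ℝ) (hκ : 0 < κ) (hp0 : 0 < p) (hp1 : p ≤ 1)
    (C : ℕ → Ω → ℝ) (E : ℕ → Ω → ℝ)
    (hmeasC : ∀ i, Measurable (C i)) (hmeasE : ∀ i, Measurable (E i))
    (hindep : iIndepFun (Sum.elim C E) μ)
    (hC1 : ∀ i, μ {ω | C i ω = 1} = ENNReal.ofReal p)
    (hC0 : ∀ i, μ {ω | C i ω = 0} = ENNReal.ofReal (1 - p))
    (hE : ∀ i, μ.map (E i) = expMeasure κ)
    (δ : Ω → ℝ)
    (hδ : ∀ ω, δ ω = if C 0 ω = 1 then 0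
        else ∑ i ∈ Finset.range (sInf {k : ℕ | 1 ≤ k ∧ C k ω = 1}), E i ω) :
    (∫⁻ ω, ENNReal.ofReal (Real.exp (-δ ω / 4)) ∂μ)
        = ENNReal.ofReal ((1 + 4 * κ) * p / (1 + 4 * κ * p))
    ∧ (∫⁻ ω, ENNReal.ofReal (Real.exp (-δ ω / 4)) ∂μ)
        ≤ ENNReal.ofReal ((1 + 4 * κ) * p) := by
  have hlaplace := lintegral_exp_neg_mul_of_firstSuccessAt (t := 4⁻¹) hκ (by norm_num) hp0 hp1
    (hindep.precomp Sum.inl_injective) hmeasC hC1 hC0 (hindep.precomp Sum.inr_injective) hmeasE hE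
    (hindep.indepFun_sumElim hmeasC hmeasE)
    fun k ω hω => (hδ ω).trans (ite_sum_range_sInf_eq_of_mem_firstSuccessAt hω _)
  have hvalue : ∫⁻ ω, ENNReal.ofReal (Real.exp (-δ ω / 4)) ∂μ
      = ENNReal.ofReal ((1 + 4 * κ) * p / (1 + 4 * κ * p)) := by
    simp_rw [neg_div, div_eq_inv_mul (δ _), hlaplace]
    congr 1
    field_simp
    ring
  refine ⟨hvalue, hvalue.trans_le (ENNReal.ofReal_le_ofReal ?_)⟩
  exact div_le_self (by positivity) (by nlinarith)
end

section
/- Let β > 0, γ ∈ (1/2, 1) and a ∈ (0,1). For the preferential attachment kernel p(x,y) = β(min(x,y))^{−γ}(max(x,y))^{γ−1}, define the integral operator T on L²([a,1]) by (Tg)(x) = ∫_a^1 p(x,y) g(y) dy. Then for every g ∈ L²([a,1]), ‖Tg‖_{L²([a,1])} ≤ (β√2/(2γ−1))·a^{1/2−γ}·‖g‖_{L²([a,1])}. -/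
/-!
The integral operator is bounded on `L²` by the `L²` norm of its kernel (Hilbert–Schmidt, via
Cauchy–Schwarz in the inner variable). For `y ≤ x` the squared kernel is `β² x^{2γ-2} y^{-2γ}`, so
`p(x,y)² ≤ β² (x^{2γ-2} y^{-2γ} + x^{-2γ} y^{2γ-2})` separates the variables, and the one-variable
integrals are `∫ₐ¹ x^{2γ-2} ≤ 1/(2γ-1)` and `∫ₐ¹ y^{-2γ} ≤ a^{1-2γ}/(2γ-1)`.
-/

open MeasureTheory Real Set

/-- The preferential attachment kernel `p(x,y) = β (min x y)^{-γ} (max x y)^{γ-1}`. -/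
noncomputable def paKernel (β γ : ℝ) (x y : ℝ) : ℝ :=
  β * (min x y) ^ (-γ) * (max x y) ^ (γ - 1)

open scoped ENNReal

section HilbertSchmidt

variable {α β : Type*} [MeasurableSpace α] [MeasurableSpace β] {μ : Measure α} {ν : Measure β}
  {𝕜 : Type*} [RCLike 𝕜]

lemma eLpNorm_two_sq {E : Type*} [NormedAddCommGroup E] (f : α → E) :
    eLpNorm f 2 μ ^ 2 = ∫⁻ x, ‖f x‖ₑ ^ 2 ∂μ := by
  simpa [ENNReal.rpow_two] using eLpNorm_nnreal_pow_eq_lintegral (μ := μ) (f := f) two_ne_zero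

lemma enorm_integral_mul_le_eLpNorm_mul_eLpNorm {f g : α → 𝕜} (hf : AEStronglyMeasurable f μ)
    (hg : AEStronglyMeasurable g μ) :
    ‖∫ x, f x * g x ∂μ‖ₑ ≤ eLpNorm f 2 μ * eLpNorm g 2 μ := by
  refine (enorm_integral_le_lintegral_enorm _).trans ?_
  rw [← eLpNorm_one_eq_lintegral_enorm]
  simpa using eLpNorm_le_eLpNorm_mul_eLpNorm_of_nnnorm (p := 2) (q := 2) (r := 1) hf hg (· * ·) 1
    (.of_forall fun _ => by simp [nnnorm_mul])

theorem eLpNorm_integral_kernel_mul_le [SFinite ν] {K : α → β → 𝕜}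
    (hK : Measurable (Function.uncurry K)) {g : β → 𝕜} (hg : AEStronglyMeasurable g ν) :
    eLpNorm (fun x => ∫ y, K x y * g y ∂ν) 2 μ ≤
      eLpNorm (Function.uncurry K) 2 (μ.prod ν) * eLpNorm g 2 ν := by
  rw [← ENNReal.pow_le_pow_left_iff two_ne_zero, mul_pow, eLpNorm_two_sq,
    eLpNorm_two_sq, lintegral_prod _ (hK.enorm.pow_const 2).aemeasurable,
    ← lintegral_mul_const _ (hK.enorm.pow_const 2).lintegral_prod_right']
  refine lintegral_mono fun x => ?_
  have hKx : AEStronglyMeasurable (K x) ν := (hK.comp measurable_prodMk_left).aestronglyMeasurable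
  calc ‖∫ y, K x y * g y ∂ν‖ₑ ^ 2 ≤ (eLpNorm (K x) 2 ν * eLpNorm g 2 ν) ^ 2 := by
        gcongr; exact enorm_integral_mul_le_eLpNorm_mul_eLpNorm hKx hg
    _ = (∫⁻ y, ‖K x y‖ₑ ^ 2 ∂ν) * eLpNorm g 2 ν ^ 2 := by rw [mul_pow, eLpNorm_two_sq]

end HilbertSchmidt

lemma lintegral_Icc_ofReal_rpow {a d : ℝ} (ha : 0 < a) (ha1 : a ≤ 1) (hd : d ≠ -1) :
    ∫⁻ x in Icc a 1, ENNReal.ofReal (x ^ d) = ENNReal.ofReal ((1 - a ^ (d + 1)) / (d + 1)) := by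
  have hpos : ∀ x ∈ Icc a 1, 0 < x := fun x hx => ha.trans_le hx.1
  have hint : IntegrableOn (fun x : ℝ => x ^ d) (Icc a 1) :=
    (continuousOn_id.rpow_const fun x hx => Or.inl (hpos x hx).ne').integrableOn_Icc
  rw [← ofReal_integral_eq_lintegral_ofReal hint
      ((ae_restrict_mem measurableSet_Icc).mono fun x hx => rpow_nonneg (hpos x hx).le d),
    integral_Icc_eq_integral_Ioc, ← intervalIntegral.integral_of_le ha1,
    integral_rpow (Or.inr ⟨hd, by rw [uIcc_of_le ha1]; exact fun h => (hpos 0 h).false⟩),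
    one_rpow]

lemma lintegral_Icc_ofReal_rpow_le_of_neg_one_lt {a d : ℝ} (ha : 0 < a) (ha1 : a ≤ 1)
    (hd : -1 < d) : ∫⁻ x in Icc a 1, ENNReal.ofReal (x ^ d) ≤ ENNReal.ofReal (1 / (d + 1)) := by
  rw [lintegral_Icc_ofReal_rpow ha ha1 hd.ne']
  have : 0 ≤ a ^ (d + 1) := rpow_nonneg ha.le _
  gcongr
  · linarith
  · linarith

lemma lintegral_Icc_ofReal_rpow_le_of_lt_neg_one {a d : ℝ} (ha : 0 < a) (ha1 : a ≤ 1)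
    (hd : d < -1) :
    ∫⁻ x in Icc a 1, ENNReal.ofReal (x ^ d) ≤ ENNReal.ofReal (a ^ (d + 1) / -(d + 1)) := by
  rw [lintegral_Icc_ofReal_rpow ha ha1 hd.ne, ← neg_div_neg_eq]
  gcongr
  · linarith
  · linarith

namespace paKernel

lemma symm (β γ x y : ℝ) : paKernel β γ x y = paKernel β γ y x := by
  simp only [paKernel, min_comm, max_comm]

lemma sq_le (β γ : ℝ) {x y : ℝ} (hx : 0 < x) (hy : 0 < y) :
    paKernel β γ x y ^ 2 ≤
      β ^ 2 * (x ^ (2 * γ - 2) * y ^ (-(2 * γ)) + x ^ (-(2 * γ)) * y ^ (2 * γ - 2)) := by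
  wlog h : y ≤ x generalizing x y
  · rw [symm]
    linarith [this hy hx (le_of_not_ge h)]
  have : paKernel β γ x y ^ 2 = β ^ 2 * (x ^ (2 * γ - 2) * y ^ (-(2 * γ))) := by
    rw [paKernel, min_eq_right h, max_eq_left h, show 2 * γ - 2 = (γ - 1) * (2 : ℕ) by ring,
      show -(2 * γ) = -γ * (2 : ℕ) by ring, rpow_mul_natCast hx.le, rpow_mul_natCast hy.le]
    ring
  rw [this]
  gcongr
  exact le_add_of_nonneg_right (by positivity)

lemma measurable_uncurry (β γ : ℝ) : Measurable (Function.uncurry (paKernel β γ)) := by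
  unfold paKernel Function.uncurry
  fun_prop

lemma enorm_sq_le (β γ : ℝ) {x y : ℝ} (hx : 0 < x) (hy : 0 < y) :
    ‖paKernel β γ x y‖ₑ ^ 2 ≤ ENNReal.ofReal (β ^ 2) *
      (ENNReal.ofReal (x ^ (2 * γ - 2)) * ENNReal.ofReal (y ^ (-(2 * γ))) +
        ENNReal.ofReal (x ^ (-(2 * γ))) * ENNReal.ofReal (y ^ (2 * γ - 2))) := by
  rw [Real.enorm_eq_ofReal_abs, ← ENNReal.ofReal_pow (abs_nonneg _), sq_abs,
    ← ENNReal.ofReal_mul (by positivity), ← ENNReal.ofReal_mul (by positivity),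
    ← ENNReal.ofReal_add (by positivity) (by positivity), ← ENNReal.ofReal_mul (by positivity)]
  exact ENNReal.ofReal_le_ofReal (sq_le β γ hx hy)

lemma lintegral_enorm_sq_le {β γ a : ℝ} (hγ : 1 / 2 < γ) (ha : 0 < a) (ha1 : a ≤ 1) :
    ∫⁻ z, ‖Function.uncurry (paKernel β γ) z‖ₑ ^ 2
        ∂(volume.restrict (Icc a 1)).prod (volume.restrict (Icc a 1)) ≤
      ENNReal.ofReal (β ^ 2) * (ENNReal.ofReal (1 / (2 * γ - 1)) *
        ENNReal.ofReal (a ^ (1 - 2 * γ) / (2 * γ - 1)) * 2) := by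
  set μ := volume.restrict (Icc a 1)
  set F : ℝ → ℝ≥0∞ := fun t => ENNReal.ofReal (t ^ (2 * γ - 2))
  set H : ℝ → ℝ≥0∞ := fun t => ENNReal.ofReal (t ^ (-(2 * γ)))
  have hF : Measurable F := by fun_prop
  have hH : Measurable H := by fun_prop
  have hFint : ∫⁻ t, F t ∂μ ≤ ENNReal.ofReal (1 / (2 * γ - 1)) := by
    convert lintegral_Icc_ofReal_rpow_le_of_neg_one_lt ha ha1 (by linarith : -1 < 2 * γ - 2)
      using 3; ring
  have hHint : ∫⁻ t, H t ∂μ ≤ ENNReal.ofReal (a ^ (1 - 2 * γ) / (2 * γ - 1)) := by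
    convert lintegral_Icc_ofReal_rpow_le_of_lt_neg_one ha ha1 (by linarith : -(2 * γ) < -1)
      using 4 <;> ring
  have hbox : ∀ᵐ z ∂μ.prod μ, z ∈ Icc a 1 ×ˢ Icc a 1 := by
    rw [Measure.prod_restrict]
    exact ae_restrict_mem (measurableSet_Icc.prod measurableSet_Icc)
  calc ∫⁻ z, ‖Function.uncurry (paKernel β γ) z‖ₑ ^ 2 ∂μ.prod μ
      ≤ ∫⁻ z, ENNReal.ofReal (β ^ 2) * (F z.1 * H z.2 + H z.1 * F z.2) ∂μ.prod μ :=
        lintegral_mono_ae <| hbox.mono fun z hz =>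
          enorm_sq_le β γ (ha.trans_le hz.1.1) (ha.trans_le hz.2.1)
    _ = ENNReal.ofReal (β ^ 2) * ((∫⁻ t, F t ∂μ) * (∫⁻ t, H t ∂μ) * 2) := by
        rw [lintegral_const_mul _ (by fun_prop), lintegral_add_left (by fun_prop),
          lintegral_prod_mul hF.aemeasurable hH.aemeasurable,
          lintegral_prod_mul hH.aemeasurable hF.aemeasurable]
        ring
    _ ≤ _ := by gcongr

lemma eLpNorm_uncurry_le {β γ a : ℝ} (hβ : 0 ≤ β) (hγ : 1 / 2 < γ) (ha : 0 < a) (ha1 : a ≤ 1) :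
    eLpNorm (Function.uncurry (paKernel β γ)) 2
        ((volume.restrict (Icc a 1)).prod (volume.restrict (Icc a 1))) ≤
      ENNReal.ofReal (β * √2 / (2 * γ - 1) * a ^ (1 / 2 - γ)) := by
  have hs : 0 < 2 * γ - 1 := by linarith
  have ha2 : (a ^ (1 / 2 - γ)) ^ 2 = a ^ (1 - 2 * γ) := by
    rw [← rpow_mul_natCast ha.le]; ring_nf
  rw [← ENNReal.pow_le_pow_left_iff two_ne_zero, eLpNorm_two_sq,
    ← ENNReal.ofReal_pow (by positivity)]
  refine (lintegral_enorm_sq_le hγ ha ha1).trans_eq ?_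
  rw [← ENNReal.ofReal_mul (by positivity), ← ENNReal.ofReal_ofNat 2,
    ← ENNReal.ofReal_mul (by positivity), ← ENNReal.ofReal_mul (by positivity),
    mul_pow, div_pow, mul_pow, sq_sqrt zero_le_two, ha2]
  congr 1
  field_simp

end paKernel

/-- Operator norm bound for the integral operator with preferential attachment kernel
on `L²([a,1])`: `‖Tg‖₂ ≤ (β√2/(2γ-1)) a^{1/2-γ} ‖g‖₂`. -/
theorem stmt8 (β γ a : ℝ) (hβ : 0 < β) (hγ : γ ∈ Set.Ioo (1 / 2 : ℝ) 1)
    (ha : a ∈ Set.Ioo (0 : ℝ) 1)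
    (g : ℝ → ℝ) (hg : MemLp g 2 (volume.restrict (Set.Icc a 1))) :
    eLpNorm (fun x => ∫ y in Set.Icc a 1, paKernel β γ x y * g y) 2
        (volume.restrict (Set.Icc a 1))
      ≤ ENNReal.ofReal (β * Real.sqrt 2 / (2 * γ - 1) * a ^ (1 / 2 - γ)) *
        eLpNorm g 2 (volume.restrict (Set.Icc a 1)) :=
  (eLpNorm_integral_kernel_mul_le (paKernel.measurable_uncurry β γ) hg.1).trans <| by
    gcongr
    exact paKernel.eLpNorm_uncurry_le hβ.le hγ.1 ha.1 ha.2.le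
end

section
/- Let β > 0, γ ∈ (1/2, 1) and a ∈ (0,1). For the preferential attachment kernel p(x,y) = β(min(x,y))^{−γ}(max(x,y))^{γ−1}, define f(x) = ∫_a^1 p(x,y) dy and g(x) = ∫_0^a p(x,y) dy for x ∈ [a,1]. Then ‖f‖_{L²([a,1])} ≤ (c₂/√(2γ−1))·a^{1/2−γ} with c₂ = β(1/γ + 1/(1−γ)), and ‖g‖_{L²([a,1])} ≤ (β(1 − a^{2γ−1})^{1/2}/((1−γ)√(2γ−1)))·a^{1−γ}. -/
/-
On `[a,1]` both functions are dominated by power functions of `x`: for `y < x ≤ 1` and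
`γ ≥ 1/2` we have `x^{γ-1} ≤ x^{-γ}`, so `p(x,y) ≤ β x^{-γ} (y^{γ-1} + y^{-γ})`, and integrating
in `y` gives `f(x) ≤ c₂ x^{-γ}`; for `y ≤ a ≤ x` the kernel is `β x^{γ-1} y^{-γ}`, so
`g(x) = β a^{1-γ} x^{γ-1} / (1-γ)` exactly. The `L²` norms then reduce to `∫_a^1 x^{-2γ}` and
`∫_a^1 x^{2γ-2}`, which are explicit.
-/

open MeasureTheory Real Set

lemma integrableOn_Icc_rpow {a : ℝ} (ha : 0 < a) (b r : ℝ) :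
    IntegrableOn (fun x : ℝ => x ^ r) (Icc a b) :=
  (continuousOn_id.rpow_const fun _ hx => .inl (ha.trans_le hx.1).ne').integrableOn_Icc

lemma integral_Icc_rpow {a b r : ℝ} (hab : a ≤ b) (h : -1 < r ∨ r ≠ -1 ∧ (0 : ℝ) ∉ uIcc a b) :
    ∫ x in Icc a b, x ^ r = (b ^ (r + 1) - a ^ (r + 1)) / (r + 1) := by
  rw [integral_Icc_eq_integral_Ioc, ← intervalIntegral.integral_of_le hab, integral_rpow h]

lemma integral_Icc_one_rpow_le_of_neg_one_lt {a r : ℝ} (ha : 0 ≤ a) (ha1 : a ≤ 1)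
    (hr : -1 < r) : ∫ x in Icc a 1, x ^ r ≤ 1 / (r + 1) := by
  rw [integral_Icc_rpow ha1 (.inl hr), one_rpow]
  exact div_le_div_of_nonneg_right (sub_le_self _ (rpow_nonneg ha _)) (by linarith)

lemma integral_Icc_one_rpow_le_of_lt_neg_one {a r : ℝ} (ha : 0 < a) (ha1 : a ≤ 1)
    (hr : r < -1) : ∫ x in Icc a 1, x ^ r ≤ a ^ (r + 1) / -(r + 1) := by
  have h0 : (0 : ℝ) ∉ uIcc a 1 := fun h => ha.not_ge (uIcc_of_le ha1 ▸ h).1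
  rw [integral_Icc_rpow ha1 (.inr ⟨hr.ne, h0⟩), one_rpow, ← neg_div_neg_eq, neg_sub]
  exact div_le_div_of_nonneg_right (sub_le_self _ zero_le_one) (by linarith)

lemma eLpNorm_two_restrict_le_of_abs_le {α : Type*} [MeasurableSpace α] {μ : Measure α}
    {s : Set α} (hs : MeasurableSet s) {F G : α → ℝ}
    (hG : IntegrableOn (fun x => G x ^ 2) s μ) (hFG : ∀ x ∈ s, |F x| ≤ G x) :
    eLpNorm F 2 (μ.restrict s) ≤ ENNReal.ofReal √(∫ x in s, G x ^ 2 ∂μ) := by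
  have hle : ∫⁻ x in s, ‖F x‖ₑ ^ (2 : ℝ) ∂μ ≤ ENNReal.ofReal (∫ x in s, G x ^ 2 ∂μ) := by
    rw [ofReal_integral_eq_lintegral_ofReal hG (ae_of_all _ fun _ => sq_nonneg _)]
    refine setLIntegral_mono' hs fun x hx => ?_
    rw [← ofReal_norm, ENNReal.ofReal_rpow_of_nonneg (norm_nonneg _) zero_le_two,
      Real.rpow_two, Real.norm_eq_abs]
    exact ENNReal.ofReal_le_ofReal (pow_le_pow_left₀ (abs_nonneg _) (hFG x hx) 2)
  rw [eLpNorm_eq_lintegral_rpow_enorm_toReal two_ne_zero ENNReal.ofNat_ne_top,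
    ENNReal.toReal_ofNat, Real.sqrt_eq_rpow,
    ← ENNReal.ofReal_rpow_of_nonneg (integral_nonneg fun _ => sq_nonneg _) one_half_pos.le]
  exact ENNReal.rpow_le_rpow hle one_half_pos.le

lemma eLpNorm_two_Icc_le_of_abs_le_mul_rpow {F : ℝ → ℝ} {a b C r B : ℝ} (ha : 0 < a)
    (hC : 0 ≤ C) (hF : ∀ x ∈ Icc a b, |F x| ≤ C * x ^ r)
    (hB : ∫ x in Icc a b, x ^ (2 * r) ≤ B) :
    eLpNorm F 2 (volume.restrict (Icc a b)) ≤ ENNReal.ofReal (C * √B) := by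
  have hsq : EqOn (fun x => (C * x ^ r) ^ 2) (fun x => C ^ 2 * x ^ (2 * r)) (Icc a b) :=
    fun x hx => by
      dsimp only
      rw [mul_pow, mul_comm 2 r, rpow_mul (ha.le.trans hx.1), rpow_two]
  have hint : IntegrableOn (fun x => C ^ 2 * x ^ (2 * r)) (Icc a b) :=
    (integrableOn_Icc_rpow ha b (2 * r)).const_mul (C ^ 2)
  refine (eLpNorm_two_restrict_le_of_abs_le measurableSet_Icc
    (hint.congr_fun hsq.symm measurableSet_Icc) hF).trans (ENNReal.ofReal_le_ofReal ?_)
  rw [setIntegral_congr_fun measurableSet_Icc hsq, integral_const_mul, sqrt_mul (sq_nonneg C),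
    sqrt_sq hC]
  gcongr

section Kernel

variable {β γ x y : ℝ}

lemma paKernel_of_le (h : x ≤ y) : paKernel β γ x y = β * x ^ (-γ) * y ^ (γ - 1) := by
  rw [paKernel, min_eq_left h, max_eq_right h]

lemma paKernel_of_ge (h : y ≤ x) : paKernel β γ x y = β * x ^ (γ - 1) * y ^ (-γ) := by
  rw [paKernel, min_eq_right h, max_eq_left h]
  ring

lemma paKernel_nonneg (hβ : 0 ≤ β) (hx : 0 ≤ x) (hy : 0 ≤ y) : 0 ≤ paKernel β γ x y := by
  unfold paKernel
  positivity

lemma paKernel_le (hβ : 0 ≤ β) (hγ : 1 / 2 ≤ γ) (hx : 0 < x) (hx1 : x ≤ 1) (hy : 0 < y) :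
    paKernel β γ x y ≤ β * x ^ (-γ) * (y ^ (γ - 1) + y ^ (-γ)) := by
  rcases le_total x y with h | h
  · rw [paKernel_of_le h]
    gcongr
    exact le_add_of_nonneg_right (rpow_nonneg hy.le _)
  · have hxγ : x ^ (γ - 1) ≤ x ^ (-γ) := rpow_le_rpow_of_exponent_ge hx hx1 (by linarith)
    calc paKernel β γ x y = β * x ^ (γ - 1) * y ^ (-γ) := paKernel_of_ge h
      _ ≤ β * x ^ (-γ) * y ^ (-γ) := by gcongr
      _ ≤ β * x ^ (-γ) * (y ^ (γ - 1) + y ^ (-γ)) := by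
        gcongr
        exact le_add_of_nonneg_left (rpow_nonneg hy.le _)

end Kernel

lemma abs_integral_Icc_paKernel_le {β γ a x : ℝ} (hβ : 0 ≤ β) (hγ : γ ∈ Ioo (1 / 2) 1)
    (ha : 0 < a) (hx : x ∈ Icc a 1) :
    |∫ y in Icc a 1, paKernel β γ x y| ≤ β * (1 / γ + 1 / (1 - γ)) * x ^ (-γ) := by
  have hx0 : 0 < x := ha.trans_le hx.1
  have h₁ := integrableOn_Icc_rpow ha 1 (γ - 1)
  have h₂ := integrableOn_Icc_rpow ha 1 (-γ)
  calc |∫ y in Icc a 1, paKernel β γ x y|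
      ≤ ∫ y in Icc a 1, β * x ^ (-γ) * (y ^ (γ - 1) + y ^ (-γ)) := by
        rw [← Real.norm_eq_abs]
        refine norm_integral_le_of_norm_le ((h₁.add h₂).const_mul _)
          (ae_restrict_of_forall_mem measurableSet_Icc fun y hy => ?_)
        have hy0 : 0 < y := ha.trans_le hy.1
        rw [Real.norm_eq_abs, abs_of_nonneg (paKernel_nonneg hβ hx0.le hy0.le)]
        exact paKernel_le hβ hγ.1.le hx0 hx.2 hy0
    _ = β * x ^ (-γ) * ((∫ y in Icc a 1, y ^ (γ - 1)) + ∫ y in Icc a 1, y ^ (-γ)) := by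
        rw [integral_const_mul, integral_add h₁ h₂]
    _ ≤ β * x ^ (-γ) * (1 / γ + 1 / (1 - γ)) := by
        have e₁ := integral_Icc_one_rpow_le_of_neg_one_lt ha.le (hx.1.trans hx.2) (r := γ - 1)
          (by linarith [hγ.1])
        have e₂ := integral_Icc_one_rpow_le_of_neg_one_lt ha.le (hx.1.trans hx.2) (r := -γ)
          (by linarith [hγ.2])
        rw [sub_add_cancel] at e₁
        rw [neg_add_eq_sub] at e₂
        gcongr
    _ = β * (1 / γ + 1 / (1 - γ)) * x ^ (-γ) := by ring

lemma integral_Icc_zero_paKernel {β γ a x : ℝ} (hγ : γ < 1) (ha : 0 ≤ a) (hax : a ≤ x) :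
    ∫ y in Icc 0 a, paKernel β γ x y = β * a ^ (1 - γ) / (1 - γ) * x ^ (γ - 1) := by
  rw [setIntegral_congr_fun measurableSet_Icc fun y hy => paKernel_of_ge (hy.2.trans hax),
    integral_const_mul, integral_Icc_rpow ha (.inl (by linarith)), neg_add_eq_sub,
    zero_rpow (by linarith), sub_zero]
  ring

/-- `L²([a,1])` norm bounds for `f(x) = ∫_a^1 p(x,y) dy` and `g(x) = ∫_0^a p(x,y) dy`
for the preferential attachment kernel, with `c₂ = β(1/γ + 1/(1-γ))`. -/
theorem stmt9 (β γ a : ℝ) (hβ : 0 < β) (hγ : γ ∈ Set.Ioo (1 / 2 : ℝ) 1)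
    (ha : a ∈ Set.Ioo (0 : ℝ) 1) :
    eLpNorm (fun x => ∫ y in Set.Icc a 1, paKernel β γ x y) 2
        (volume.restrict (Set.Icc a 1))
      ≤ ENNReal.ofReal
          ((β * (1 / γ + 1 / (1 - γ))) / Real.sqrt (2 * γ - 1) * a ^ (1 / 2 - γ))
    ∧ eLpNorm (fun x => ∫ y in Set.Icc 0 a, paKernel β γ x y) 2
        (volume.restrict (Set.Icc a 1))
      ≤ ENNReal.ofReal
          (β * Real.sqrt (1 - a ^ (2 * γ - 1)) / ((1 - γ) * Real.sqrt (2 * γ - 1))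
            * a ^ (1 - γ)) := by
  obtain ⟨ha0, ha1⟩ := ha
  have h2γ : 0 < 2 * γ - 1 := by linarith [hγ.1]
  have h1γ : 0 < 1 - γ := by linarith [hγ.2]
  constructor
  · have hc₂ : 0 ≤ β * (1 / γ + 1 / (1 - γ)) := by
      have : 0 < γ := by linarith [hγ.1]
      positivity
    have hB := integral_Icc_one_rpow_le_of_lt_neg_one ha0 ha1.le (r := 2 * -γ) (by linarith)
    refine (eLpNorm_two_Icc_le_of_abs_le_mul_rpow ha0 hc₂
      (fun x hx => abs_integral_Icc_paKernel_le hβ.le hγ ha0 hx) hB).trans_eq (congrArg _ ?_)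
    rw [show -(2 * -γ + 1) = 2 * γ - 1 by ring, sqrt_div' _ h2γ.le, sqrt_eq_rpow (a ^ _),
      ← rpow_mul ha0.le, show (2 * -γ + 1) * (1 / 2) = 1 / 2 - γ by ring]
    ring
  · have hC : 0 ≤ β * a ^ (1 - γ) / (1 - γ) := by positivity
    have hB := (integral_Icc_rpow ha1.le (a := a) (r := 2 * (γ - 1)) (.inl (by linarith))).le
    refine (eLpNorm_two_Icc_le_of_abs_le_mul_rpow ha0 hC (fun x hx => ?_) hB).trans_eq
      (congrArg _ ?_)
    · rw [integral_Icc_zero_paKernel hγ.2 ha0.le hx.1,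
        abs_of_nonneg (mul_nonneg hC (rpow_nonneg (ha0.le.trans hx.1) _))]
    · rw [one_rpow, show 2 * (γ - 1) + 1 = 2 * γ - 1 by ring, sqrt_div' _ h2γ.le]
      field_simp
end

section
/- Let c > 0 and γ ∈ (0,1). For k ∈ ℕ define μ(k) = ∫_0^1 e^{−c x^{−γ}} (c x^{−γ})^k / k! dx, the mixed Poisson probability mass function with parameter c x^{−γ}, x uniform on (0,1). Then lim_{k→∞} log μ(k) / log k = −(1 + 1/γ). -/
/-!
The substitution `y = x^{-γ}` turns `μ(k)` into `c^k / (γ k!) · ∫_1^∞ y^{k - 1/γ - 1} e^{-cy} dy`.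
This truncated Gamma integral lies between `e^{-c}` and `1` times `Γ(k - 1/γ) c^{1/γ - k}`, so
`μ(k)` is comparable to `Γ(k - 1/γ) / Γ(k + 1)` up to constants. Log-convexity of `Γ` places
`log Γ(k + 1) - log Γ(k - 1/γ)` between `(1 + 1/γ) log (k - 1 - 1/γ)` and `(1 + 1/γ) log (k + 1)`.
-/

open Real Filter Set MeasureTheory Topology

lemma image_rpow_neg_Ioo_zero_one {γ : ℝ} (hγ : 0 < γ) :
    (fun x : ℝ => x ^ (-γ)) '' Ioo 0 1 = Ioi 1 := by
  ext y
  constructor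
  · rintro ⟨x, ⟨hx0, hx1⟩, rfl⟩
    exact one_lt_rpow_of_pos_of_lt_one_of_neg hx0 hx1 (neg_neg_of_pos hγ)
  · intro hy
    have hy0 : 0 < y := one_pos.trans hy
    refine ⟨y ^ (-γ⁻¹), ⟨rpow_pos_of_pos hy0 _, rpow_lt_one_of_one_lt_of_neg hy (by simpa)⟩, ?_⟩
    simp [← rpow_mul hy0.le, hγ.ne']

section ChangeOfVariables

variable {E : Type*} [NormedAddCommGroup E] [NormedSpace ℝ E]

lemma setIntegral_Ioi_one_rpow_smul_eq_smul_integral_comp_rpow_neg (g : ℝ → E) {γ : ℝ}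
    (hγ : 0 < γ) :
    ∫ y in Ioi 1, y ^ (-γ⁻¹ - 1) • g y = γ • ∫ x in (0:ℝ)..1, g (x ^ (-γ)) := by
  have hderiv : ∀ x ∈ Ioo (0:ℝ) 1,
      HasDerivWithinAt (fun x => x ^ (-γ)) (-γ * x ^ (-γ - 1)) (Ioo 0 1) x :=
    fun x hx => (hasDerivAt_rpow_const (Or.inl hx.1.ne')).hasDerivWithinAt
  have hinj : InjOn (fun x : ℝ => x ^ (-γ)) (Ioo 0 1) :=
    (rpow_left_injOn (neg_ne_zero.mpr hγ.ne')).mono fun x hx => hx.1.le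
  rw [← image_rpow_neg_Ioo_zero_one hγ,
    integral_image_eq_integral_abs_deriv_smul measurableSet_Ioo hderiv hinj,
    intervalIntegral.integral_of_le zero_le_one, integral_Ioc_eq_integral_Ioo,
    ← integral_smul]
  refine setIntegral_congr_fun measurableSet_Ioo fun x hx => ?_
  have hx0 := hx.1
  -- the Jacobian `γ x^{-γ-1}` cancels the weight `(x^{-γ})^{-1/γ-1} = x^{1+γ}`
  have hweight : |-γ * x ^ (-γ - 1)| * (x ^ (-γ)) ^ (-γ⁻¹ - 1) = γ := by
    rw [abs_mul, abs_neg, abs_of_pos hγ, abs_of_pos (rpow_pos_of_pos hx0 _),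
      ← rpow_mul hx0.le, mul_assoc, ← rpow_add hx0]
    field_simp
    simp
  simp only [smul_smul, hweight]

lemma setIntegral_Ioi_one_comp_sub_one (g : ℝ → E) :
    ∫ y in Ioi 1, g (y - 1) = ∫ y in Ioi 0, g y := by
  have h := integral_image_eq_integral_abs_deriv_smul measurableSet_Ioi
    (fun x _ => ((hasDerivAt_id' (x := x)).add_const (1:ℝ)).hasDerivWithinAt)
    (add_left_injective 1).injOn (fun y => g (y - 1)) (s := Ioi (0:ℝ))
  simpa [image_add_const_Ioi] using h

end ChangeOfVariables

section GammaIntegral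

variable {a c : ℝ}

lemma integrableOn_rpow_mul_exp_neg_mul_Ioi (ha : 0 < a) (hc : 0 < c) :
    IntegrableOn (fun y : ℝ => y ^ (a - 1) * exp (-(c * y))) (Ioi 0) := by
  simpa using integrableOn_rpow_mul_exp_neg_mul_rpow (p := 1) (by linarith) one_pos hc

lemma setIntegral_Ioi_one_rpow_mul_exp_neg_mul_le (ha : 0 < a) (hc : 0 < c) :
    ∫ y in Ioi 1, y ^ (a - 1) * exp (-(c * y)) ≤ (1 / c) ^ a * Gamma a := by
  rw [← integral_rpow_mul_exp_neg_mul_Ioi ha hc]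
  refine setIntegral_mono_set (integrableOn_rpow_mul_exp_neg_mul_Ioi ha hc) ?_
    (Ioi_subset_Ioi zero_le_one).eventuallyLE
  filter_upwards [ae_restrict_mem measurableSet_Ioi] with y hy
  exact mul_nonneg (rpow_nonneg (le_of_lt hy) _) (exp_nonneg _)

-- shifting the integral by one costs at most the factor `e^{-c}`, since `(y - 1)^{a-1} ≤ y^{a-1}`
lemma exp_neg_mul_Gamma_le_setIntegral_Ioi_one (ha : 1 ≤ a) (hc : 0 < c) :
    exp (-c) * ((1 / c) ^ a * Gamma a) ≤ ∫ y in Ioi 1, y ^ (a - 1) * exp (-(c * y)) := by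
  rw [← integral_rpow_mul_exp_neg_mul_Ioi (by linarith) hc,
    ← setIntegral_Ioi_one_comp_sub_one, ← integral_const_mul]
  refine integral_mono_of_nonneg ?_
    ((integrableOn_rpow_mul_exp_neg_mul_Ioi (by linarith) hc).mono_set
      (Ioi_subset_Ioi zero_le_one)) ?_
  all_goals filter_upwards [ae_restrict_mem measurableSet_Ioi] with y (hy : 1 < y)
  · have : 0 ≤ (y - 1) ^ (a - 1) := rpow_nonneg (by linarith) _
    positivity
  · have hexp : exp (-c) * exp (-(c * (y - 1))) = exp (-(c * y)) := by
      rw [← exp_add]; ring_nf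
    calc exp (-c) * ((y - 1) ^ (a - 1) * exp (-(c * (y - 1))))
        = (y - 1) ^ (a - 1) * exp (-(c * y)) := by rw [← hexp]; ring
      _ ≤ y ^ (a - 1) * exp (-(c * y)) := by
        gcongr; linarith

end GammaIntegral

section LogGamma

variable {x a : ℝ}

lemma log_Gamma_add_one_sub_log_Gamma (hx : 0 < x) :
    log (Gamma (x + 1)) - log (Gamma x) = log x := by
  rw [Gamma_add_one hx.ne', log_mul hx.ne' (Gamma_pos_of_pos hx).ne']
  ring

-- slopes of the convex function `log ∘ Gamma` increase, and over unit steps they are logarithms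
lemma mul_log_sub_one_le_log_Gamma_add_sub_log_Gamma (hx : 1 < x) (ha : 0 < a) :
    a * log (x - 1) ≤ log (Gamma (x + a)) - log (Gamma x) := by
  have h := convexOn_log_Gamma.slope_mono_adjacent (x := x - 1) (y := x) (z := x + a)
    (by simp; linarith) (by simp; linarith) (by linarith) (by linarith)
  have hstep := log_Gamma_add_one_sub_log_Gamma (x := x - 1) (by linarith)
  simp only [Function.comp_apply, sub_add_cancel] at h hstep
  rw [sub_sub_cancel, div_one, hstep, add_sub_cancel_left, le_div_iff₀ ha] at h
  linarith

lemma log_Gamma_add_sub_log_Gamma_le_mul_log (hx : 0 < x) (ha : 0 < a) :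
    log (Gamma (x + a)) - log (Gamma x) ≤ a * log (x + a) := by
  have h := convexOn_log_Gamma.slope_mono_adjacent (x := x) (y := x + a) (z := x + a + 1)
    (by simp; linarith) (by simp; linarith) (by linarith) (by linarith)
  have hstep := log_Gamma_add_one_sub_log_Gamma (x := x + a) (by linarith)
  simp only [Function.comp_apply] at h hstep
  rw [add_sub_cancel_left, add_sub_cancel_left, div_one, hstep, div_le_iff₀ ha] at h
  linarith

end LogGamma

lemma tendsto_sub_mul_log_add_div_log (A b t : ℝ) :
    Tendsto (fun x : ℝ => (A - b * log (x + t)) / log x) atTop (𝓝 (-b)) := by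
  have hlog : Tendsto (fun x : ℝ => (A - b * (log (x + t) - log x)) / log x) atTop (𝓝 0) :=
    (tendsto_const_nhds.sub ((tendsto_log_comp_add_sub_log t).const_mul b)).div_atTop
      tendsto_log_atTop
  have hsum := hlog.sub_const b
  rw [zero_sub] at hsum
  refine hsum.congr' ?_
  filter_upwards [eventually_gt_atTop 1] with x hx
  have := (log_pos hx).ne'
  field_simp
  ring

noncomputable def mixedPoissonPMF (c γ : ℝ) (k : ℕ) : ℝ :=
  ∫ x in (0:ℝ)..1, exp (-(c * x ^ (-γ))) * (c * x ^ (-γ)) ^ k / (k.factorial : ℝ)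

section MixedPoisson

variable {c γ : ℝ}

lemma mixedPoissonPMF_eq (hγ : 0 < γ) (k : ℕ) :
    mixedPoissonPMF c γ k = c ^ k / (γ * k.factorial) *
      ∫ y in Ioi 1, y ^ ((k - γ⁻¹) - 1) * exp (-(c * y)) := by
  have h := setIntegral_Ioi_one_rpow_smul_eq_smul_integral_comp_rpow_neg
    (fun y => exp (-(c * y)) * (c * y) ^ k / (k.factorial : ℝ)) hγ
  simp only [smul_eq_mul] at h
  rw [mixedPoissonPMF, ← mul_right_inj' hγ.ne', ← h, ← integral_const_mul,
    ← integral_const_mul]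
  refine setIntegral_congr_fun measurableSet_Ioi fun y (hy : 1 < y) => ?_
  have hy0 : 0 < y := one_pos.trans hy
  rw [show (k : ℝ) - γ⁻¹ - 1 = k + (-γ⁻¹ - 1) by ring, rpow_add hy0, rpow_natCast]
  field_simp
  ring

lemma mixedPoissonPMF_bounds (hc : 0 < c) (hγ : 0 < γ) {k : ℕ} (hk : γ⁻¹ + 1 ≤ k) :
    exp (-c) * (c ^ γ⁻¹ / γ * (Gamma (k - γ⁻¹) / Gamma (k + 1))) ≤ mixedPoissonPMF c γ k ∧
      mixedPoissonPMF c γ k ≤ c ^ γ⁻¹ / γ * (Gamma (k - γ⁻¹) / Gamma (k + 1)) := by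
  have ha : 1 ≤ (k : ℝ) - γ⁻¹ := by linarith
  have hprefactor : c ^ k / (γ * k.factorial) * ((1 / c) ^ ((k : ℝ) - γ⁻¹) * Gamma (k - γ⁻¹))
      = c ^ γ⁻¹ / γ * (Gamma (k - γ⁻¹) / Gamma (k + 1)) := by
    rw [Gamma_nat_eq_factorial, one_div, inv_rpow hc.le, ← rpow_neg hc.le, ← rpow_natCast,
      neg_sub, ← mul_assoc, div_mul_eq_mul_div, ← rpow_add hc, add_sub_cancel]
    ring
  have hpos : 0 ≤ c ^ k / (γ * k.factorial) := by positivity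
  rw [mixedPoissonPMF_eq hγ, ← hprefactor, mul_left_comm]
  exact ⟨mul_le_mul_of_nonneg_left (exp_neg_mul_Gamma_le_setIntegral_Ioi_one ha hc) hpos,
    mul_le_mul_of_nonneg_left (setIntegral_Ioi_one_rpow_mul_exp_neg_mul_le (by linarith) hc) hpos⟩

lemma log_mixedPoissonPMF_bounds (hc : 0 < c) (hγ : 0 < γ) {k : ℕ} (hk : γ⁻¹ + 1 < k) :
    log (exp (-c) * (c ^ γ⁻¹ / γ)) - (1 + γ⁻¹) * log (k + 1) ≤ log (mixedPoissonPMF c γ k) ∧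
      log (mixedPoissonPMF c γ k) ≤ log (c ^ γ⁻¹ / γ) - (1 + γ⁻¹) * log (k - (1 + γ⁻¹)) := by
  have hx : 1 < (k : ℝ) - γ⁻¹ := by linarith
  have ha : 0 < 1 + γ⁻¹ := by positivity
  have hshift : (k : ℝ) - γ⁻¹ + (1 + γ⁻¹) = k + 1 := by ring
  have hlow := mul_log_sub_one_le_log_Gamma_add_sub_log_Gamma hx ha
  have hupp := log_Gamma_add_sub_log_Gamma_le_mul_log (one_pos.trans hx) ha
  rw [hshift, sub_sub, add_comm γ⁻¹ 1] at hlow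
  rw [hshift] at hupp
  have hΓ₀ := Gamma_pos_of_pos (s := (k : ℝ) - γ⁻¹) (by linarith)
  have hΓ₁ := Gamma_pos_of_pos (s := (k : ℝ) + 1) (by linarith)
  have hlogratio : log (Gamma (k - γ⁻¹) / Gamma (k + 1)) =
      log (Gamma (k - γ⁻¹)) - log (Gamma (k + 1)) := log_div hΓ₀.ne' hΓ₁.ne'
  obtain ⟨hμlow, hμupp⟩ := mixedPoissonPMF_bounds hc hγ hk.le
  have hC : 0 < c ^ γ⁻¹ / γ := by positivity
  have hρ : 0 < Gamma (k - γ⁻¹) / Gamma (k + 1) := by positivity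
  constructor
  · calc log (exp (-c) * (c ^ γ⁻¹ / γ)) - (1 + γ⁻¹) * log (k + 1)
        ≤ log (exp (-c) * (c ^ γ⁻¹ / γ)) + log (Gamma (k - γ⁻¹) / Gamma (k + 1)) := by
          rw [hlogratio]; linarith
      _ = log (exp (-c) * (c ^ γ⁻¹ / γ * (Gamma (k - γ⁻¹) / Gamma (k + 1)))) := by
          rw [← mul_assoc, log_mul (by positivity) hρ.ne']
      _ ≤ log (mixedPoissonPMF c γ k) := log_le_log (by positivity) hμlow
  · calc log (mixedPoissonPMF c γ k)
        ≤ log (c ^ γ⁻¹ / γ * (Gamma (k - γ⁻¹) / Gamma (k + 1))) :=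
          log_le_log (lt_of_lt_of_le (by positivity) hμlow) hμupp
      _ = log (c ^ γ⁻¹ / γ) + log (Gamma (k - γ⁻¹) / Gamma (k + 1)) := log_mul hC.ne' hρ.ne'
      _ ≤ log (c ^ γ⁻¹ / γ) - (1 + γ⁻¹) * log (k - (1 + γ⁻¹)) := by
          rw [hlogratio]; linarith

end MixedPoisson

theorem stmt16_general (c γ : ℝ) (hc : 0 < c) (hγ0 : 0 < γ) :
    Filter.Tendsto
      (fun k : ℕ =>
        Real.log (∫ x in (0 : ℝ)..1,
            Real.exp (-(c * x ^ (-γ))) * (c * x ^ (-γ)) ^ k / (k.factorial : ℝ))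
          / Real.log (k : ℝ))
      Filter.atTop (nhds (-(1 + 1 / γ))) := by
  change Tendsto (fun k : ℕ => log (mixedPoissonPMF c γ k) / log k) atTop _
  rw [one_div]
  have hlow := (tendsto_sub_mul_log_add_div_log (log (exp (-c) * (c ^ γ⁻¹ / γ))) (1 + γ⁻¹) 1).comp
    tendsto_natCast_atTop_atTop
  have hupp := (tendsto_sub_mul_log_add_div_log (log (c ^ γ⁻¹ / γ)) (1 + γ⁻¹) (-(1 + γ⁻¹))).comp
    tendsto_natCast_atTop_atTop
  simp only [Function.comp_def, ← sub_eq_add_neg] at hlow hupp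
  have hk : ∀ᶠ k : ℕ in atTop, γ⁻¹ + 1 < (k : ℝ) :=
    tendsto_natCast_atTop_atTop.eventually_gt_atTop _
  refine tendsto_of_tendsto_of_tendsto_of_le_of_le' hlow hupp ?_ ?_ <;>
    filter_upwards [hk] with k hk <;>
    have hlogk : 0 ≤ log (k : ℝ) := log_nonneg (by linarith [inv_pos.mpr hγ0])
  · exact div_le_div_of_nonneg_right (log_mixedPoissonPMF_bounds hc hγ0 hk).1 hlogk
  · exact div_le_div_of_nonneg_right (log_mixedPoissonPMF_bounds hc hγ0 hk).2 hlogk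

/-- The mixed Poisson distribution `μ(k) = ∫_0^1 e^{-c x^{-γ}} (c x^{-γ})^k / k! dx`
satisfies `μ(k) = k^{-(1+1/γ) + o(1)}`, i.e. `log μ(k) / log k → -(1 + 1/γ)`. -/
theorem stmt16 (c γ : ℝ) (hc : 0 < c) (hγ0 : 0 < γ) (hγ1 : γ < 1) :
    Filter.Tendsto
      (fun k : ℕ =>
        Real.log (∫ x in (0 : ℝ)..1,
            Real.exp (-(c * x ^ (-γ))) * (c * x ^ (-γ)) ^ k / (k.factorial : ℝ))
          / Real.log (k : ℝ))
      Filter.atTop (nhds (-(1 + 1 / γ))) :=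
  stmt16_general c γ hc hγ0
end

section
/- Let β > 0 and γ ∈ (0,1). There exist constants c, C > 0 and N₀ ∈ ℕ, depending only on β and γ, such that for all N ≥ N₀ and all i ∈ {1,…,N}: c·(N/i)^γ ≤ Σ_{j=1, j≠i}^N min(β N^{2γ−1} i^{−γ} j^{−γ}, 1) ≤ C·(N/i)^γ. -/
open Real Finset

lemma step_bound {γ : ℝ} (hγ0 : 0 < γ) (hγ1 : γ < 1) {x : ℝ} (hx : 1 ≤ x) :
    (x - 1) ^ (1 - γ) + (1 - γ) * x ^ (-γ) ≤ x ^ (1 - γ) := by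
  have hx0 : 0 < x := lt_of_lt_of_le one_pos hx
  have hs : -1 ≤ -(1 / x) := by
    have : 1 / x ≤ 1 := by
      rw [div_le_one hx0]; exact hx
    linarith
  have hbern := rpow_one_add_le_one_add_mul_self hs (by linarith : (0:ℝ) ≤ 1 - γ)
    (by linarith : (1:ℝ) - γ ≤ 1)
  -- (1 - 1/x)^(1-γ) ≤ 1 - (1-γ)/x
  have h1 : (1 - 1 / x) ^ (1 - γ) ≤ 1 - (1 - γ) * (1 / x) := by
    simpa [sub_eq_add_neg, mul_comm] using hbern
  have hxp : (0:ℝ) ≤ x ^ (1 - γ) := Real.rpow_nonneg hx0.le _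
  have h2 : x ^ (1 - γ) * (1 - 1 / x) ^ (1 - γ) ≤ x ^ (1 - γ) * (1 - (1 - γ) * (1 / x)) :=
    mul_le_mul_of_nonneg_left h1 hxp
  have h3 : x ^ (1 - γ) * (1 - 1 / x) ^ (1 - γ) = (x - 1) ^ (1 - γ) := by
    rw [← Real.mul_rpow hx0.le (by
      have : 1 / x ≤ 1 := by rw [div_le_one hx0]; exact hx
      linarith)]
    congr 1
    field_simp
  have h4 : x ^ (1 - γ) * (1 / x) = x ^ (-γ) := by
    have hxγ : x ^ γ ≠ 0 := (Real.rpow_pos_of_pos hx0 γ).ne'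
    rw [Real.rpow_sub hx0, Real.rpow_one, Real.rpow_neg hx0.le]
    field_simp
  rw [h3] at h2
  calc (x - 1) ^ (1 - γ) + (1 - γ) * x ^ (-γ)
      = (x - 1) ^ (1 - γ) + (1 - γ) * (x ^ (1 - γ) * (1 / x)) := by rw [h4]
    _ ≤ x ^ (1 - γ) * (1 - (1 - γ) * (1 / x)) + (1 - γ) * (x ^ (1 - γ) * (1 / x)) := by linarith
    _ = x ^ (1 - γ) := by ring

lemma sum_rpow_le {γ : ℝ} (hγ0 : 0 < γ) (hγ1 : γ < 1) (N : ℕ) :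
    ∑ j ∈ Finset.Icc 1 N, (j : ℝ) ^ (-γ) ≤ (N : ℝ) ^ (1 - γ) / (1 - γ) := by
  induction N with
  | zero => simp [Real.zero_rpow (by linarith : (1:ℝ) - γ ≠ 0)]
  | succ n ih =>
    rw [Finset.sum_Icc_succ_top (by omega : 1 ≤ n + 1)]
    have h1γ : (0:ℝ) < 1 - γ := by linarith
    have hstep := step_bound hγ0 hγ1 (x := ((n : ℝ) + 1))
      (le_add_of_nonneg_left (Nat.cast_nonneg n))
    have : ((n:ℝ) + 1 - 1) = (n : ℝ) := by ring
    rw [this] at hstep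
    have key : ((n:ℝ) ^ (1 - γ) + (1 - γ) * ((n:ℝ) + 1) ^ (-γ)) / (1 - γ)
        ≤ ((n:ℝ) + 1) ^ (1 - γ) / (1 - γ) := (div_le_div_iff_of_pos_right h1γ).mpr hstep
    have key2 : ((n:ℝ) ^ (1 - γ) + (1 - γ) * ((n:ℝ) + 1) ^ (-γ)) / (1 - γ)
        = (n:ℝ) ^ (1 - γ) / (1 - γ) + ((n:ℝ) + 1) ^ (-γ) := by
      field_simp
    push_cast
    linarith

/-- For the factor connection probability `p_{i,j} = min(β N^{2γ-1} i^{-γ} j^{-γ}, 1)`,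
the expected degree `Σ_{j ≠ i} p_{i,j}` of vertex `i` is of order `(N/i)^γ`. -/
theorem stmt18 (β γ : ℝ) (hβ : 0 < β) (hγ0 : 0 < γ) (hγ1 : γ < 1) :
    ∃ c C : ℝ, 0 < c ∧ 0 < C ∧ ∃ N₀ : ℕ, ∀ N : ℕ, N₀ ≤ N → ∀ i ∈ Finset.Icc 1 N,
      c * ((N : ℝ) / i) ^ γ ≤
        (∑ j ∈ (Finset.Icc 1 N).erase i,
          min (β * (N : ℝ) ^ (2 * γ - 1) * (i : ℝ) ^ (-γ) * (j : ℝ) ^ (-γ)) 1)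
      ∧ (∑ j ∈ (Finset.Icc 1 N).erase i,
          min (β * (N : ℝ) ^ (2 * γ - 1) * (i : ℝ) ^ (-γ) * (j : ℝ) ^ (-γ)) 1)
        ≤ C * ((N : ℝ) / i) ^ γ := by
  have h1γ : (0:ℝ) < 1 - γ := by linarith
  refine ⟨min β 1 / 2, β / (1 - γ), by positivity, by positivity, 2, ?_⟩
  intro N hN i hi
  rw [Finset.mem_Icc] at hi
  obtain ⟨hi1, hiN⟩ := hi
  have hN0 : (0:ℝ) < N := by exact_mod_cast (by omega : 0 < N)
  have hN2 : (2:ℝ) ≤ N := by exact_mod_cast hN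
  have hi0 : (0:ℝ) < i := by exact_mod_cast (by omega : 0 < i)
  have hi1' : (1:ℝ) ≤ i := by exact_mod_cast hi1
  have hiN' : (i:ℝ) ≤ N := by exact_mod_cast hiN
  have hiγ : (0:ℝ) ≤ (i:ℝ) ^ (-γ) := Real.rpow_nonneg hi0.le _
  have hdiv : ((N : ℝ) / i) ^ γ = (N : ℝ) ^ γ * (i : ℝ) ^ (-γ) := by
    rw [Real.div_rpow hN0.le hi0.le, Real.rpow_neg hi0.le, div_eq_mul_inv]
  have hNγ0 : (0:ℝ) ≤ (N:ℝ) ^ γ := Real.rpow_nonneg hN0.le _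
  constructor
  · -- lower bound
    set b : ℝ := β * (N : ℝ) ^ (2 * γ - 1) * (i : ℝ) ^ (-γ) * (N : ℝ) ^ (-γ) with hb
    have hterm : ∀ j ∈ (Finset.Icc 1 N).erase i,
        min b 1 ≤ min (β * (N : ℝ) ^ (2 * γ - 1) * (i : ℝ) ^ (-γ) * (j : ℝ) ^ (-γ)) 1 := by
      intro j hj
      rw [Finset.mem_erase, Finset.mem_Icc] at hj
      have hj0 : (0:ℝ) < j := by exact_mod_cast (by omega : 0 < j)
      have hjN : (j:ℝ) ≤ N := by exact_mod_cast hj.2.2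
      have : (N:ℝ) ^ (-γ) ≤ (j:ℝ) ^ (-γ) :=
        Real.rpow_le_rpow_of_nonpos hj0 hjN (by linarith)
      have hco : (0:ℝ) ≤ β * (N : ℝ) ^ (2 * γ - 1) * (i : ℝ) ^ (-γ) := by positivity
      exact min_le_min (by rw [hb]; exact mul_le_mul_of_nonneg_left this hco) le_rfl
    have hcard : ((Finset.Icc 1 N).erase i).card = N - 1 := by
      rw [Finset.card_erase_of_mem (Finset.mem_Icc.mpr ⟨hi1, hiN⟩), Nat.card_Icc]
      omega
    have hsum : ((N:ℝ) - 1) * min b 1 ≤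
        ∑ j ∈ (Finset.Icc 1 N).erase i,
          min (β * (N : ℝ) ^ (2 * γ - 1) * (i : ℝ) ^ (-γ) * (j : ℝ) ^ (-γ)) 1 := by
      have := Finset.card_nsmul_le_sum ((Finset.Icc 1 N).erase i) _ (min b 1) hterm
      rw [hcard, nsmul_eq_mul] at this
      have hc : ((N - 1 : ℕ) : ℝ) = (N:ℝ) - 1 := by
        have : 1 ≤ N := by omega
        push_cast [this]; ring
      rwa [hc] at this
    refine le_trans ?_ hsum
    have hbeq : b = β * (N:ℝ) ^ (γ - 1) * (i:ℝ) ^ (-γ) := by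
      rw [hb, show β * (N : ℝ) ^ (2 * γ - 1) * (i : ℝ) ^ (-γ) * (N : ℝ) ^ (-γ)
        = β * ((N : ℝ) ^ (2 * γ - 1) * (N : ℝ) ^ (-γ)) * (i : ℝ) ^ (-γ) from by ring,
        ← Real.rpow_add hN0]
      ring_nf
    have hNsplit : (N:ℝ) * (N:ℝ) ^ (γ - 1) = (N:ℝ) ^ γ := by
      nth_rewrite 1 [← Real.rpow_one (N:ℝ)]
      rw [← Real.rpow_add hN0]; ring_nf
    have hNhalf : (N:ℝ) / 2 ≤ (N:ℝ) - 1 := by linarith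
    rcases le_total b 1 with hb1 | hb1
    · rw [min_eq_left hb1, hbeq, hdiv]
      have hP : (0:ℝ) ≤ (N:ℝ) ^ (γ - 1) := Real.rpow_nonneg hN0.le _
      have key : β / 2 * ((N:ℝ) ^ γ * (i:ℝ) ^ (-γ))
          ≤ ((N:ℝ) - 1) * (β * (N:ℝ) ^ (γ - 1) * (i:ℝ) ^ (-γ)) := by
        rw [← hNsplit]
        nlinarith [mul_nonneg (mul_nonneg hβ.le hP) hiγ, mul_nonneg hP hiγ]
      refine le_trans ?_ key
      have : min β 1 / 2 ≤ β / 2 := by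
        have := min_le_left β 1; linarith
      exact mul_le_mul_of_nonneg_right this (by positivity)
    · rw [min_eq_right hb1]
      have h1 : ((N:ℝ) / i) ^ γ ≤ (N:ℝ) ^ γ :=
        Real.rpow_le_rpow (by positivity) (div_le_self hN0.le hi1') hγ0.le
      have h2 : (N:ℝ) ^ γ ≤ (N:ℝ) := by
        nth_rewrite 2 [← Real.rpow_one (N:ℝ)]
        exact Real.rpow_le_rpow_of_exponent_le (by linarith) hγ1.le
      have hc12 : min β 1 / 2 ≤ 1 / 2 := by
        have := min_le_right β 1; linarith
      have hrnn : (0:ℝ) ≤ ((N:ℝ)/i) ^ γ := Real.rpow_nonneg (by positivity) _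
      calc min β 1 / 2 * ((N : ℝ) / i) ^ γ ≤ 1 / 2 * ((N : ℝ) / i) ^ γ :=
            mul_le_mul_of_nonneg_right hc12 hrnn
        _ ≤ 1 / 2 * (N:ℝ) := by nlinarith
        _ ≤ ((N:ℝ) - 1) * 1 := by linarith
  · -- upper bound
    have h1 : (∑ j ∈ (Finset.Icc 1 N).erase i,
          min (β * (N : ℝ) ^ (2 * γ - 1) * (i : ℝ) ^ (-γ) * (j : ℝ) ^ (-γ)) 1)
        ≤ ∑ j ∈ Finset.Icc 1 N, β * (N : ℝ) ^ (2 * γ - 1) * (i : ℝ) ^ (-γ) * (j : ℝ) ^ (-γ) := by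
      refine le_trans (Finset.sum_le_sum fun j _ => min_le_left _ _) ?_
      refine Finset.sum_le_sum_of_subset_of_nonneg (Finset.erase_subset _ _) ?_
      intro j hj _
      rw [Finset.mem_Icc] at hj
      have hj0 : (0:ℝ) < j := by exact_mod_cast (by omega : 0 < j)
      positivity
    have h2 : ∑ j ∈ Finset.Icc 1 N, β * (N : ℝ) ^ (2 * γ - 1) * (i : ℝ) ^ (-γ) * (j : ℝ) ^ (-γ)
        = β * (N : ℝ) ^ (2 * γ - 1) * (i : ℝ) ^ (-γ) * ∑ j ∈ Finset.Icc 1 N, (j : ℝ) ^ (-γ) := by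
      rw [Finset.mul_sum]
    have h3 := sum_rpow_le hγ0 hγ1 N
    have hco : (0:ℝ) ≤ β * (N : ℝ) ^ (2 * γ - 1) * (i : ℝ) ^ (-γ) := by positivity
    have h4 : β * (N : ℝ) ^ (2 * γ - 1) * (i : ℝ) ^ (-γ) * ((N : ℝ) ^ (1 - γ) / (1 - γ))
        = β / (1 - γ) * ((N : ℝ) / i) ^ γ := by
      rw [hdiv, show β * (N : ℝ) ^ (2 * γ - 1) * (i : ℝ) ^ (-γ) * ((N : ℝ) ^ (1 - γ) / (1 - γ))
        = β / (1 - γ) * ((N : ℝ) ^ (2 * γ - 1) * (N : ℝ) ^ (1 - γ)) * (i : ℝ) ^ (-γ) from by ring,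
        ← Real.rpow_add hN0, show 2 * γ - 1 + (1 - γ) = γ from by ring]
      ring
    calc (∑ j ∈ (Finset.Icc 1 N).erase i,
          min (β * (N : ℝ) ^ (2 * γ - 1) * (i : ℝ) ^ (-γ) * (j : ℝ) ^ (-γ)) 1)
        ≤ β * (N : ℝ) ^ (2 * γ - 1) * (i : ℝ) ^ (-γ) * ∑ j ∈ Finset.Icc 1 N, (j : ℝ) ^ (-γ) := by
          rw [← h2]; exact h1
      _ ≤ β * (N : ℝ) ^ (2 * γ - 1) * (i : ℝ) ^ (-γ) * ((N : ℝ) ^ (1 - γ) / (1 - γ)) :=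
          mul_le_mul_of_nonneg_left h3 hco
      _ = β / (1 - γ) * ((N : ℝ) / i) ^ γ := h4
end

section
/- Let η ∈ [0, 1/2) and γ ∈ (0, 2/(3+2η)), and set 𝔠 = 1 − γ/2 − γη. Then γ < 𝔠 and γ + 𝔠 > 1, and there exist r₀ ≥ 1 and λ₀ ∈ (0,1) such that for all r ≥ r₀ and all λ ∈ (0, λ₀) for which a := r·λ^{2/(γ(1−2η))} < 1, one has 4λ·∫_0^1 y^{−γ}·(max(y,a))^{−𝔠} dy ≤ 1. -/
/-! Write `β = γ + 𝔠 - 1 > 0`. Splitting the integral at `a`, where `max y a` switches from `a`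
to `y`, gives `a^{-β}/(1-γ) + (a^{-β} - 1)/β ≤ C a^{-β}` with `C = 1/(1-γ) + 1/β`. The exponent
of the level is chosen so that `a^{-β} = r^{-β}/λ`: the factor `λ` cancels and
`4λ ∫ ≤ 4C r^{-β}`, which is at most `1` once `r ≥ (4C)^{1/β}`. -/

open Real Set intervalIntegral MeasureTheory

section MaxRpow

variable {γ c a : ℝ}

lemma intervalIntegrable_rpow_mul_max_rpow (ha : 0 < a) (hγ : γ < 1) (s t : ℝ) :
    IntervalIntegrable (fun y => y ^ (-γ) * max y a ^ (-c)) volume s t :=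
  (intervalIntegrable_rpow' (by linarith)).mul_continuousOn <|
    ((continuous_id.max continuous_const).rpow_const fun _ =>
      Or.inl (lt_max_of_lt_right ha).ne').continuousOn

lemma integral_zero_rpow_mul_max_rpow (ha : 0 < a) (hγ : γ < 1) :
    ∫ y in (0 : ℝ)..a, y ^ (-γ) * max y a ^ (-c) = a ^ (1 - γ - c) / (1 - γ) := by
  have hmax : EqOn (fun y => y ^ (-γ) * max y a ^ (-c)) (fun y => y ^ (-γ) * a ^ (-c))
      (uIcc 0 a) := by
    intro y hy
    rw [uIcc_of_le ha.le] at hy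
    simp only [max_eq_right hy.2]
  rw [integral_congr hmax, intervalIntegral.integral_mul_const, integral_rpow (Or.inl (by linarith)),
    zero_rpow (by linarith), show 1 - γ - c = -γ + 1 + -c by ring, rpow_add ha (-γ + 1)]
  ring

lemma integral_rpow_mul_max_rpow_of_le {b : ℝ} (ha : 0 < a) (hab : a ≤ b) (hγc : γ + c ≠ 1) :
    ∫ y in a..b, y ^ (-γ) * max y a ^ (-c) = (b ^ (1 - γ - c) - a ^ (1 - γ - c)) / (1 - γ - c) := by
  have hmax : EqOn (fun y => y ^ (-γ) * max y a ^ (-c)) (fun y => y ^ (-γ - c)) (uIcc a b) := by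
    intro y hy
    rw [uIcc_of_le hab] at hy
    simp only [max_eq_left hy.1, sub_eq_add_neg, rpow_add (ha.trans_le hy.1)]
  have hzero : (0 : ℝ) ∉ uIcc a b := by
    rw [uIcc_of_le hab]
    exact fun h => ha.not_ge h.1
  rw [integral_congr hmax, integral_rpow (Or.inr ⟨fun h => hγc (by linarith), hzero⟩),
    show -γ - c + 1 = 1 - γ - c by ring]

lemma integral_rpow_mul_max_rpow (ha : 0 < a) (ha1 : a ≤ 1) (hγ : γ < 1) (hγc : γ + c ≠ 1) :
    ∫ y in (0 : ℝ)..1, y ^ (-γ) * max y a ^ (-c) =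
      a ^ (1 - γ - c) / (1 - γ) + (1 - a ^ (1 - γ - c)) / (1 - γ - c) := by
  rw [← integral_add_adjacent_intervals (b := a) (intervalIntegrable_rpow_mul_max_rpow ha hγ _ _)
    (intervalIntegrable_rpow_mul_max_rpow ha hγ _ _), integral_zero_rpow_mul_max_rpow ha hγ,
    integral_rpow_mul_max_rpow_of_le ha ha1 hγc, one_rpow]

lemma integral_rpow_mul_max_rpow_le (ha : 0 < a) (ha1 : a ≤ 1) (hγ : γ < 1) (hγc : 1 < γ + c) :
    ∫ y in (0 : ℝ)..1, y ^ (-γ) * max y a ^ (-c) ≤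
      a ^ (-(γ + c - 1)) * (1 / (1 - γ) + 1 / (γ + c - 1)) := by
  set β := γ + c - 1 with hβ
  have hβpos : 0 < β := by linarith
  rw [integral_rpow_mul_max_rpow ha ha1 hγ hγc.ne', show 1 - γ - c = -β by ring]
  have hsecond : (1 - a ^ (-β)) / -β = a ^ (-β) * (1 / β) - 1 / β := by
    field_simp
    ring
  rw [hsecond, mul_add]
  simp only [mul_one_div]
  linarith [one_div_pos.mpr hβpos]

end MaxRpow

lemma mul_rpow_neg_of_mul_eq_one {r lam e β : ℝ} (hr : 0 ≤ r) (hlam : 0 < lam) (he : e * β = 1) :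
    (r * lam ^ e) ^ (-β) = r ^ (-β) / lam := by
  rw [mul_rpow hr (rpow_nonneg hlam.le _), ← rpow_mul hlam.le,
    show e * -β = -1 by rw [mul_neg, he], rpow_neg_one, div_eq_mul_inv]

theorem exists_four_mul_integral_rpow_mul_max_rpow_le_one {γ c e : ℝ} (hγ : γ < 1)
    (hγc : 1 < γ + c) (he : e * (γ + c - 1) = 1) :
    ∃ r₀ : ℝ, 1 ≤ r₀ ∧ ∀ r : ℝ, r₀ ≤ r → ∀ lam : ℝ, 0 < lam → r * lam ^ e < 1 →
      4 * lam * ∫ y in (0 : ℝ)..1, y ^ (-γ) * max y (r * lam ^ e) ^ (-c) ≤ 1 := by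
  set β := γ + c - 1 with hβ
  have hβpos : 0 < β := by linarith
  set C := 1 / (1 - γ) + 1 / β with hC
  have hCpos : 0 < C := add_pos (one_div_pos.mpr (by linarith)) (one_div_pos.mpr hβpos)
  refine ⟨max 1 ((4 * C) ^ β⁻¹), le_max_left _ _, fun r hr lam hlam ha1 => ?_⟩
  have hrpos : 0 < r := one_pos.trans_le ((le_max_left _ _).trans hr)
  have hapos : 0 < r * lam ^ e := mul_pos hrpos (rpow_pos_of_pos hlam e)
  have hr4C : 4 * C ≤ r ^ β :=
    calc 4 * C = ((4 * C) ^ β⁻¹) ^ β := by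
          rw [← rpow_mul (by positivity), inv_mul_cancel₀ hβpos.ne', rpow_one]
      _ ≤ r ^ β := rpow_le_rpow (by positivity) ((le_max_right _ _).trans hr) hβpos.le
  calc 4 * lam * ∫ y in (0 : ℝ)..1, y ^ (-γ) * max y (r * lam ^ e) ^ (-c)
      ≤ 4 * lam * ((r * lam ^ e) ^ (-β) * C) := by
        gcongr
        exact integral_rpow_mul_max_rpow_le hapos ha1.le hγ hγc
    _ = 4 * C / r ^ β := by
        rw [mul_rpow_neg_of_mul_eq_one hrpos.le hlam he, rpow_neg hrpos.le]
        field_simp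
    _ ≤ 1 := (div_le_one (rpow_pos_of_pos hrpos _)).mpr hr4C

/-- Verification of the supermartingale condition for the factor kernel with scoring function
`s(x) = x^{-𝔠}`, `𝔠 = 1 - γ/2 - γη`, and level `a(λ) = r λ^{2/(γ(1-2η))}`, in the regime
`0 ≤ η < 1/2`, `γ < 2/(3+2η)`. -/
theorem stmt19 (η γ 𝔠 : ℝ) (hη0 : 0 ≤ η) (hη : η < 1 / 2)
    (hγ0 : 0 < γ) (hγ : γ < 2 / (3 + 2 * η)) (h𝔠 : 𝔠 = 1 - γ / 2 - γ * η) :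
    γ < 𝔠 ∧ 1 < γ + 𝔠 ∧
    ∃ r₀ lam₀ : ℝ, 1 ≤ r₀ ∧ 0 < lam₀ ∧ lam₀ < 1 ∧
      ∀ r : ℝ, r₀ ≤ r → ∀ lam : ℝ, 0 < lam → lam < lam₀ →
        r * lam ^ (2 / (γ * (1 - 2 * η))) < 1 →
        4 * lam * ∫ y in (0 : ℝ)..1,
            y ^ (-γ) * (max y (r * lam ^ (2 / (γ * (1 - 2 * η))))) ^ (-𝔠) ≤ 1 := by
  have hγη : γ * (3 + 2 * η) < 2 := (lt_div_iff₀ (by linarith)).mp hγ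
  have hγ1 : γ < 1 := by nlinarith
  have hβ : γ + 𝔠 - 1 = γ * (1 - 2 * η) / 2 := by rw [h𝔠]; ring
  have hβpos : 0 < γ * (1 - 2 * η) := mul_pos hγ0 (by linarith)
  have hγ𝔠 : 1 < γ + 𝔠 := by linarith
  have he : 2 / (γ * (1 - 2 * η)) * (γ + 𝔠 - 1) = 1 := by
    rw [hβ]
    field_simp
    exact div_self (by linarith)
  obtain ⟨r₀, hr₀, hbound⟩ := exists_four_mul_integral_rpow_mul_max_rpow_le_one hγ1 hγ𝔠 he
  refine ⟨by rw [h𝔠]; nlinarith, hγ𝔠, r₀, 1 / 2, hr₀, by norm_num, by norm_num, ?_⟩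
  exact fun r hr lam hlam _ ha1 => hbound r hr lam hlam ha1
end
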